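/- arXiv:1508.00014 — 5 statements merged into one kernel-verified Lean document; each statement's English description precedes it below -/
import Mathlib

section
/- Let p be a prime and let M be a finitely generated module over the ring ℤ_p of p-adic integers. Then every additive group homomorphism f : M → ℤ_p is automatically ℤ_p-linear; that is, f(c • m) = c * f(m) for all c ∈ ℤ_p and m ∈ M. -/
/-- For a finitely generated module `M` over the `p`-adic integers, every additive group
homomorphism `f : M → ℤ_p` is automatically `ℤ_p`-linear. -/
theorem addMonoidHom_padicInt_smul (p : ℕ) [Fact p.Prime]
    (M : Type*) [AddCommGroup M] [Module (PadicInt p) M] [Module.Finite (PadicInt p) M]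
    (f : M →+ PadicInt p) (c : PadicInt p) (m : M) :
    f (c • m) = c * f m := by
  set x : PadicInt p := f (c • m) - c * f m with hx
  suffices hx0 : x = 0 by exact sub_eq_zero.mp hx0
  -- show x is divisible by p^n for all n
  have key : ∀ n : ℕ, x ∈ Ideal.span {(p : PadicInt p) ^ n} := by
    intro n
    set k : ℕ := c.appr n with hk
    have hspec := PadicInt.appr_spec n c
    rw [Ideal.mem_span_singleton] at hspec ⊢
    obtain ⟨d, hd⟩ := hspec
    have hc : c = (k : PadicInt p) + (p : PadicInt p) ^ n * d := by
      rw [← hd]; ring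
    have h1 : c • m = k • m + ((p ^ n : ℕ) • (d • m)) := by
      rw [hc, add_smul]
      congr 1
      · rw [Nat.cast_smul_eq_nsmul]
      · rw [mul_smul, ← Nat.cast_smul_eq_nsmul (PadicInt p) (p ^ n) (d • m),
          Nat.cast_pow]
    have h2 : f (c • m) = (k : PadicInt p) * f m
        + (p : PadicInt p) ^ n * f (d • m) := by
      rw [h1, f.map_add, f.map_nsmul, f.map_nsmul, nsmul_eq_mul, nsmul_eq_mul,
        Nat.cast_pow]
    refine ⟨f (d • m) - d * f m, ?_⟩
    rw [hx, h2, hc]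
    ring
  -- p^n ∣ x for all n forces x = 0
  by_contra hne
  obtain ⟨j, hj⟩ := PadicInt.exists_pow_neg_lt p (ε := ‖x‖) (norm_pos_iff.mpr hne)
  have := (PadicInt.norm_le_pow_iff_mem_span_pow x j).mpr (key j)
  linarith
end

section
/- Let p be an odd prime. Every group homomorphism from the unit group ℤ_pˣ (written multiplicatively) to the additive group (ℤ_p, +) is continuous for the p-adic topologies, and the abelian group of all such homomorphisms, with ℤ_p acting by pointwise scalar multiplication on the target, is a free ℤ_p-module of rank 1; that is, there exists a homomorphism f₀ : ℤ_pˣ → (ℤ_p, +) such that every homomorphism f : ℤ_pˣ → (ℤ_p, +) can be written uniquely as f = c • f₀ for some c ∈ ℤ_p. -/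
namespace PHomAux
variable {p : ℕ} [hfp : Fact p.Prime]

local notation "R" => PadicInt p

lemma dvd_iff_norm (n : ℕ) (x : R) : (p:R)^n ∣ x ↔ ‖x‖ ≤ (p:ℝ)^(-(n:ℤ)) := by
  rw [PadicInt.norm_le_pow_iff_mem_span_pow, Ideal.mem_span_singleton]

lemma p_cast_ne_zero : (p:R) ≠ 0 := by
  exact_mod_cast Nat.cast_ne_zero.2 hfp.out.ne_zero

lemma tendsto_pow_inv :
    Filter.Tendsto (fun n : ℕ => (p:ℝ)^(-(n:ℤ))) Filter.atTop (nhds 0) := by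
  have hp1 : (1:ℝ) < (p:ℝ) := by exact_mod_cast hfp.out.one_lt
  have h := tendsto_pow_atTop_nhds_zero_of_lt_one
    (r := (p:ℝ)⁻¹) (by positivity) (by rw [inv_lt_one₀ (by linarith)]; exact hp1)
  exact h.congr (fun n => by rw [inv_pow, ← zpow_natCast, ← zpow_neg])

lemma eq_zero_of_forall_dvd {x : R} (h : ∀ n : ℕ, (p:R)^n ∣ x) : x = 0 := by
  have h2 : ∀ n : ℕ, ‖x‖ ≤ (p:ℝ)^(-(n:ℤ)) := fun n => (dvd_iff_norm n x).1 (h n)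
  have : ‖x‖ ≤ 0 :=
    ge_of_tendsto (tendsto_pow_inv (p := p)) (Filter.Eventually.of_forall fun n => h2 n)
  simpa using le_antisymm this (norm_nonneg x)

end PHomAux

section
variable {A : Type*} [CommRing A]

/-- `(1+z)^n ≡ 1 + n z  mod z²`. -/
lemma sq_dvd_pow_sub (z : A) (n : ℕ) : z^2 ∣ (1+z)^n - (1 + n*z) := by
  induction n with
  | zero => simp
  | succ n ih =>
    have : (1+z)^(n+1) - (1 + (n+1 : ℕ)*z)
        = (1+z) * ((1+z)^n - (1 + n*z)) + n * z^2 := by push_cast; ring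
    rw [this]
    exact dvd_add (Dvd.dvd.mul_left ih _) (Dvd.dvd.mul_left (dvd_refl _) _)

lemma sum_range_peel_two (g : ℕ → A) (n : ℕ) :
    ∑ k ∈ Finset.range (n+2), g k = (∑ k ∈ Finset.range n, g (k+2)) + g 1 + g 0 := by
  rw [Finset.sum_range_succ' g (n+1), Finset.sum_range_succ' (fun k => g (k+1)) n]

end

namespace PHomAux
variable {p : ℕ} [hfp : Fact p.Prime]

local notation "R" => PadicInt p

/-- Key binomial estimate: for odd `p` and `m ≥ 1`,
`(1 + p^m a)^p ≡ 1 + p^(m+1) a  mod p^(2m+1)`. -/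
lemma pow_p_key (hp3 : 3 ≤ p) {m : ℕ} (hm : 1 ≤ m) (a : R) :
    (p:R)^(2*m+1) ∣ (1 + (p:R)^m * a)^p - (1 + (p:R)^(m+1) * a) := by
  set z : R := (p:R)^m * a with hz
  have hexp := add_pow z 1 p
  simp only [one_pow, mul_one] at hexp
  obtain ⟨q, hq⟩ : ∃ q, p + 1 = q + 2 := ⟨p - 1, by omega⟩
  have hsplit : ∑ k ∈ Finset.range (p+1), z^k * (p.choose k : R)
      = (∑ k ∈ Finset.range q, z^(k+2) * (p.choose (k+2) : R)) + 1 + p * z := by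
    rw [hq, sum_range_peel_two]
    simp [Nat.choose_one_right]
    ring
  have hmain : (1 + z)^p - (1 + (p:R)^(m+1) * a)
      = ∑ k ∈ Finset.range q, z^(k+2) * (p.choose (k+2) : R) := by
    have h1 : (1 + z)^p = (z + 1)^p := by ring_nf
    rw [h1, hexp, hsplit, hz]
    ring_nf
  rw [show (1 + (p:R)^m * a) = 1 + z from rfl, hmain]
  apply Finset.dvd_sum
  intro k hk
  have hkq : k + 2 ≤ p := by
    have := Finset.mem_range.1 hk; omega
  rcases lt_or_eq_of_le hkq with hlt | heq
  · -- p ∣ choose, p^{2m} ∣ z^{k+2}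
    have hc : (p:R) ∣ (p.choose (k+2) : R) := by
      have := hfp.out.dvd_choose_self (by omega : k+2 ≠ 0) hlt
      exact_mod_cast Nat.cast_dvd_cast this
    have hzp : (p:R)^(2*m) ∣ z^(k+2) := by
      rw [hz, mul_pow, ← pow_mul]
      exact Dvd.dvd.mul_right (pow_dvd_pow _ (by nlinarith)) _
    calc (p:R)^(2*m+1) = (p:R)^(2*m) * (p:R) := by rw [pow_succ]
    _ ∣ z^(k+2) * (p.choose (k+2) : R) := mul_dvd_mul hzp hc
  · -- k + 2 = p : z^p divisible by p^{mp}, mp ≥ 2m+1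
    have hzp : (p:R)^(2*m+1) ∣ z^(k+2) := by
      rw [hz, mul_pow, ← pow_mul]
      exact Dvd.dvd.mul_right (pow_dvd_pow _ (by nlinarith)) _
    exact hzp.mul_right _

end PHomAux

namespace PHomAux
variable {p : ℕ} [hfp : Fact p.Prime]
local notation "R" => PadicInt p

lemma fermat (u : (PadicInt p)ˣ) : (p:R) ∣ (u:R)^(p-1) - 1 := by
  have hker : (u:R)^(p-1) - 1 ∈ RingHom.ker (PadicInt.toZMod (p := p)) := by
    rw [RingHom.mem_ker]
    have hu : IsUnit (PadicInt.toZMod ((u:R))) := (u.isUnit).map _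
    haveI : Fact (1 < p) := ⟨hfp.out.one_lt⟩
    have : (PadicInt.toZMod ((u:R)))^(p-1) = 1 :=
      ZMod.pow_card_sub_one_eq_one hu.ne_zero
    simp [this]
  rw [PadicInt.ker_toZMod, PadicInt.maximalIdeal_eq_span_p, Ideal.mem_span_singleton] at hker
  exact hker

end PHomAux

namespace PHomAux
variable {p : ℕ} [hfp : Fact p.Prime]
local notation "R" => PadicInt p

lemma pow_p_step (hp3 : 3 ≤ p) {m : ℕ} (hm : 1 ≤ m) {x : R} (h : (p:R)^m ∣ x - 1) :
    (p:R)^(m+1) ∣ x^p - 1 := by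
  obtain ⟨a, ha⟩ := h
  have hx : x = 1 + (p:R)^m * a := by linear_combination ha
  have hkey := pow_p_key hp3 hm a
  rw [← hx] at hkey
  have : x^p - 1 = (x^p - (1 + (p:R)^(m+1) * a)) + (p:R)^(m+1) * a := by ring
  rw [this]
  exact dvd_add (dvd_trans (pow_dvd_pow _ (by omega)) hkey) (Dvd.dvd.mul_right (dvd_refl _) _)

lemma pow_p_iter (hp3 : 3 ≤ p) {m : ℕ} (hm : 1 ≤ m) {x : R} (h : (p:R)^m ∣ x - 1) (k : ℕ) :
    (p:R)^(m+k) ∣ x^(p^k) - 1 := by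
  induction k with
  | zero => simpa using h
  | succ k ih =>
    have : x^(p^(k+1)) = (x^(p^k))^p := by rw [← pow_mul, pow_succ]
    rw [this, show m + (k+1) = (m+k) + 1 by ring]
    exact pow_p_step hp3 (by omega) ih

lemma unit_pow_dvd (hp3 : 3 ≤ p) (u : (PadicInt p)ˣ) (k : ℕ) :
    (p:R)^(k+1) ∣ (u:R)^((p-1)*p^k) - 1 := by
  rw [pow_mul]
  have := pow_p_iter hp3 (le_refl 1) (by simpa using fermat u) k
  simpa [add_comm] using this

noncomputable def aSeq (hp3 : 3 ≤ p) (u : (PadicInt p)ˣ) (k : ℕ) : R :=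
  Classical.choose (unit_pow_dvd hp3 u k)

lemma aSeq_spec (hp3 : 3 ≤ p) (u : (PadicInt p)ˣ) (k : ℕ) :
    (u:R)^((p-1)*p^k) = 1 + (p:R)^(k+1) * aSeq hp3 u k := by
  have := Classical.choose_spec (unit_pow_dvd hp3 u k)
  unfold aSeq
  linear_combination this

lemma aSeq_succ (hp3 : 3 ≤ p) (u : (PadicInt p)ˣ) (k : ℕ) :
    (p:R)^(k+1) ∣ aSeq hp3 u (k+1) - aSeq hp3 u k := by
  have h1 := aSeq_spec hp3 u k
  have h2 := aSeq_spec hp3 u (k+1)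
  have hx : ((u:R)^((p-1)*p^k))^p = (u:R)^((p-1)*p^(k+1)) := by
    rw [← pow_mul]; ring_nf
  have hkey := pow_p_key hp3 (m := k+1) (by omega) (aSeq hp3 u k)
  rw [← h1, hx, h2] at hkey
  have heq : (1 + (p:R)^(k+2) * aSeq hp3 u (k+1)) - (1 + (p:R)^(k+1+1) * aSeq hp3 u k)
      = (p:R)^(k+2) * (aSeq hp3 u (k+1) - aSeq hp3 u k) := by ring
  rw [heq] at hkey
  have hcancel : (p:R)^(2*(k+1)+1) = (p:R)^(k+2) * (p:R)^(k+1) := by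
    rw [← pow_add]; ring_nf
  rw [hcancel] at hkey
  exact (mul_dvd_mul_iff_left (pow_ne_zero _ (p_cast_ne_zero (p := p)))).1 hkey

lemma aSeq_mono (hp3 : 3 ≤ p) (u : (PadicInt p)ˣ) {k j : ℕ} (h : k ≤ j) :
    (p:R)^(k+1) ∣ aSeq hp3 u j - aSeq hp3 u k := by
  induction j, h using Nat.le_induction with
  | base => simp
  | succ j hj ih =>
    have h1 : (p:R)^(k+1) ∣ aSeq hp3 u (j+1) - aSeq hp3 u j :=
      dvd_trans (pow_dvd_pow _ (by omega)) (aSeq_succ hp3 u j)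
    have := dvd_add h1 ih
    simpa using this

end PHomAux

namespace PHomAux
variable {p : ℕ} [hfp : Fact p.Prime]
local notation "R" => PadicInt p

lemma aSeq_cauchy (hp3 : 3 ≤ p) (u : (PadicInt p)ˣ) : CauchySeq (aSeq hp3 u) := by
  apply cauchySeq_of_le_tendsto_0 (b := fun N : ℕ => (p:ℝ)^(-(N:ℤ)))
  · intro n m N hn hm
    rw [dist_eq_norm]
    have h1 : (p:R)^(N+1) ∣ aSeq hp3 u n - aSeq hp3 u m := by
      have := (aSeq_mono hp3 u hn).sub (aSeq_mono hp3 u hm)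
      simpa using this
    have := (dvd_iff_norm (N+1) _).1 h1
    refine le_trans this ?_
    apply zpow_le_zpow_right₀ (by exact_mod_cast hfp.out.one_le) (by omega)
  · exact tendsto_pow_inv

noncomputable def Llog (hp3 : 3 ≤ p) (u : (PadicInt p)ˣ) : R :=
  Classical.choose (cauchySeq_tendsto_of_complete (aSeq_cauchy hp3 u))

lemma Llog_spec (hp3 : 3 ≤ p) (u : (PadicInt p)ˣ) (k : ℕ) :
    (p:R)^(k+1) ∣ Llog hp3 u - aSeq hp3 u k := by
  have ht := Classical.choose_spec (cauchySeq_tendsto_of_complete (aSeq_cauchy hp3 u))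
  rw [dvd_iff_norm]
  have htt : Filter.Tendsto (fun j => ‖aSeq hp3 u j - aSeq hp3 u k‖)
      Filter.atTop (nhds ‖Llog hp3 u - aSeq hp3 u k‖) :=
    ((ht.sub tendsto_const_nhds).norm)
  apply le_of_tendsto htt
  rw [Filter.eventually_atTop]
  exact ⟨k, fun j hj => (dvd_iff_norm (k+1) _).1 (aSeq_mono hp3 u hj)⟩

lemma aSeq_mul (hp3 : 3 ≤ p) (u v : (PadicInt p)ˣ) (k : ℕ) :
    aSeq hp3 (u*v) k - aSeq hp3 u k - aSeq hp3 v k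
      = (p:R)^(k+1) * (aSeq hp3 u k * aSeq hp3 v k) := by
  have h1 := aSeq_spec hp3 u k
  have h2 := aSeq_spec hp3 v k
  have h3 := aSeq_spec hp3 (u*v) k
  have hcoe : ((u*v : (PadicInt p)ˣ) : R)^((p-1)*p^k) = (u:R)^((p-1)*p^k) * (v:R)^((p-1)*p^k) := by
    rw [Units.val_mul, mul_pow]
  rw [h3, h1, h2] at hcoe
  apply mul_left_cancel₀ (pow_ne_zero (k+1) (p_cast_ne_zero (p := p)))
  linear_combination hcoe

lemma Llog_add (hp3 : 3 ≤ p) (u v : (PadicInt p)ˣ) :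
    Llog hp3 (u*v) = Llog hp3 u + Llog hp3 v := by
  rw [← sub_eq_zero]
  apply eq_zero_of_forall_dvd
  intro n
  have h1 := Llog_spec hp3 (u*v) n
  have h2 := Llog_spec hp3 u n
  have h3 := Llog_spec hp3 v n
  have h4 : (p:R)^(n+1) ∣ aSeq hp3 (u*v) n - aSeq hp3 u n - aSeq hp3 v n := by
    rw [aSeq_mul hp3 u v n]; exact Dvd.dvd.mul_right (dvd_refl _) _
  have : (p:R)^(n+1) ∣ Llog hp3 (u*v) - (Llog hp3 u + Llog hp3 v) := by
    have := ((h1.sub h2).sub h3).add h4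
    convert this using 1
    ring
  exact dvd_trans (pow_dvd_pow _ (by omega)) this

lemma Llog_small (hp3 : 3 ≤ p) (u : (PadicInt p)ˣ) {m : ℕ}
    (h : (p:R)^(m+1) ∣ (u:R) - 1) : (p:R)^m ∣ Llog hp3 u := by
  have hpow : (p:R)^(m+1) ∣ (u:R)^(p-1) - 1 :=
    dvd_trans h (by simpa using sub_dvd_pow_sub_pow ((u:R)) 1 (p-1))
  have hiter := pow_p_iter hp3 (m := m+1) (by omega) hpow m
  rw [← pow_mul] at hiter
  rw [aSeq_spec hp3 u m] at hiter
  have hm1 : (1 + (p:R)^(m+1) * aSeq hp3 u m) - 1 = (p:R)^(m+1) * aSeq hp3 u m := by ring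
  rw [hm1] at hiter
  have : (p:R)^(m+1+m) = (p:R)^(m+1) * (p:R)^m := by rw [← pow_add]
  rw [this] at hiter
  have ha : (p:R)^m ∣ aSeq hp3 u m :=
    (mul_dvd_mul_iff_left (pow_ne_zero _ (p_cast_ne_zero (p := p)))).1 hiter
  have := (Llog_spec hp3 u m)
  have h2 : (p:R)^m ∣ Llog hp3 u - aSeq hp3 u m := dvd_trans (pow_dvd_pow _ (by omega)) this
  simpa using h2.add ha

end PHomAux

namespace PHomAux
variable {p : ℕ} [hfp : Fact p.Prime]
local notation "R" => PadicInt p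

lemma dvd_of_norm_lt {x : R} {n : ℕ} (h : ‖x‖ < (p:ℝ)^(-(n:ℤ))) : (p:R)^(n+1) ∣ x := by
  rw [dvd_iff_norm]
  have h2 : ‖x‖ < (p:ℝ)^((-(n:ℤ)-1) + 1) := by rw [show (-(n:ℤ)-1)+1 = -(n:ℤ) by ring]; exact h
  have := (PadicInt.norm_le_pow_iff_norm_lt_pow_add_one x (-(n:ℤ)-1)).2 h2
  convert this using 2
  push_cast; ring

lemma proot (hp3 : 3 ≤ p) {m : ℕ} (hm : 3 ≤ m) {y : R} (h : (p:R)^m ∣ y - 1) :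
    ∃ z : R, z^p = y ∧ (p:R)^(m-1) ∣ z - 1 := by
  classical
  set F : Polynomial R := Polynomial.X^p - Polynomial.C y with hF
  have heval1 : F.eval 1 = 1 - y := by simp [hF]
  have hderiv : F.derivative = Polynomial.C (p:R) * Polynomial.X^(p-1) := by
    simp [hF, Polynomial.derivative_X_pow]
  have hderiv1 : F.derivative.eval 1 = (p:R) := by simp [hderiv]
  have h3 : (p:R)^3 ∣ y - 1 := dvd_trans (pow_dvd_pow _ hm) h
  have h3' : (p:R)^3 ∣ 1 - y := by rw [show (1:R) - y = -(y-1) by ring]; exact dvd_neg.2 h3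
  have hnorm1 : ‖F.eval 1‖ ≤ (p:ℝ)^(-(3:ℤ)) := by
    rw [heval1]
    exact_mod_cast (dvd_iff_norm 3 _).1 h3'
  have hplt : (1:ℝ) < (p:ℝ) := by exact_mod_cast hfp.out.one_lt
  have hcond : ‖F.eval 1‖ < ‖F.derivative.eval 1‖ ^ 2 := by
    rw [hderiv1, PadicInt.norm_p]
    calc ‖F.eval 1‖ ≤ (p:ℝ)^(-(3:ℤ)) := hnorm1
    _ < (p:ℝ)^(-(2:ℤ)) := by
        apply zpow_lt_zpow_right₀ hplt (by norm_num)
    _ = ((p:ℝ)⁻¹)^2 := by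
        rw [← zpow_neg_one, ← zpow_natCast ((p:ℝ)^(-1:ℤ)) 2, ← zpow_mul]; norm_num
  obtain ⟨z, hz0, hzdist, -, -⟩ := hensels_lemma hcond
  have hzp : z^p = y := by
    have : Polynomial.aeval z F = z^p - y := by simp [hF]
    rw [this] at hz0
    exact sub_eq_zero.1 hz0
  refine ⟨z, hzp, ?_⟩
  -- first: p^2 ∣ z - 1
  have h2 : (p:R)^2 ∣ z - 1 := by
    apply dvd_of_norm_lt (n := 1)
    rw [Polynomial.coe_aeval_eq_eval, hderiv1, PadicInt.norm_p] at hzdist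
    simpa [zpow_neg, zpow_one] using hzdist
  -- bootstrap
  have hboot : ∀ s : ℕ, 1 ≤ s → (p:R)^s ∣ z - 1 → (p:R)^(s+2) ∣ z^p - 1 →
      (p:R)^(s+1) ∣ z - 1 := by
    intro s hs hz hzp2
    obtain ⟨t, ht⟩ := hz
    have hzt : z = 1 + (p:R)^s * t := by linear_combination ht
    have hkey := pow_p_key hp3 hs t
    rw [← hzt] at hkey
    have hd : (p:R)^(s+2) ∣ (p:R)^(s+1) * t := by
      have e1 : (p:R)^(s+1) * t = (z^p - 1) - (z^p - (1 + (p:R)^(s+1) * t)) := by ring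
      rw [e1]
      exact hzp2.sub (dvd_trans (pow_dvd_pow _ (by omega)) hkey)
    have hpt : (p:R) ∣ t := by
      have : (p:R)^(s+1) * (p:R) ∣ (p:R)^(s+1) * t := by
        rw [show (p:R)^(s+1) * (p:R) = (p:R)^(s+2) by rw [← pow_succ]]
        exact hd
      exact (mul_dvd_mul_iff_left (pow_ne_zero _ (p_cast_ne_zero (p := p)))).1 this
    obtain ⟨t', ht'⟩ := hpt
    rw [hzt, ht']
    exact ⟨t', by ring⟩
  have hzp1 : (p:R)^m ∣ z^p - 1 := by rw [hzp]; exact h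
  have main : ∀ s : ℕ, 2 ≤ s → s ≤ m - 1 → (p:R)^s ∣ z - 1 := by
    intro s hs2
    induction s, hs2 using Nat.le_induction with
    | base => intro _; exact h2
    | succ s hs ih =>
      intro hsm
      exact hboot s (by omega) (ih (by omega))
        (dvd_trans (pow_dvd_pow _ (by omega)) hzp1)
  exact main (m-1) (by omega) le_rfl

end PHomAux

namespace PHomAux
variable {p : ℕ} [hfp : Fact p.Prime]
local notation "R" => PadicInt p

lemma claimA_root (hp3 : 3 ≤ p) : ∀ (k : ℕ) (y : R), (p:R)^(k+3) ∣ y - 1 →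
    ∃ z : R, z^(p^k) = y ∧ (p:R)^3 ∣ z - 1 := by
  intro k
  induction k with
  | zero => intro y hy; exact ⟨y, by simp, by simpa using hy⟩
  | succ k ih =>
    intro y hy
    obtain ⟨z₁, hz₁p, hz₁⟩ := proot hp3 (m := k+4) (by omega)
      (show (p:R)^(k+4) ∣ y - 1 from hy)
    obtain ⟨z, hzp, hz3⟩ := ih z₁ (show (p:R)^(k+3) ∣ z₁ - 1 from hz₁)
    refine ⟨z, ?_, hz3⟩
    rw [pow_succ, pow_mul, hzp, hz₁p]

lemma isUnit_of_sub_one {z : R} (h : (p:R) ∣ z - 1) : IsUnit z := by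
  by_contra hnot
  have hmem : z ∈ nonunits R := hnot
  have hz : z ∈ IsLocalRing.maximalIdeal R := hmem
  rw [PadicInt.maximalIdeal_eq_span_p, Ideal.mem_span_singleton] at hz
  have h1 : (p:R) ∣ 1 := by
    have := hz.sub h
    simpa using this
  exact PadicInt.irreducible_p.not_isUnit (isUnit_of_dvd_one h1)

section fLemmas
variable {f : (PadicInt p)ˣ → PadicInt p}
  (hf : ∀ x y : (PadicInt p)ˣ, f (x * y) = f x + f y)
include hf

lemma f_one : f 1 = 0 := by
  have := hf 1 1
  simpa using this

lemma f_pow (x : (PadicInt p)ˣ) (n : ℕ) : f (x^n) = n • f x := by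
  induction n with
  | zero => simpa using f_one hf
  | succ n ih => rw [pow_succ, hf, ih, succ_nsmul]

lemma f_inv (x : (PadicInt p)ˣ) : f x⁻¹ = - f x := by
  have := hf x x⁻¹
  rw [mul_inv_cancel, f_one hf] at this
  exact (neg_eq_of_add_eq_zero_right this.symm).symm

lemma claimA (hp3 : 3 ≤ p) (k : ℕ) (w : (PadicInt p)ˣ)
    (hw : (p:R)^(k+3) ∣ (w:R) - 1) : (p:R)^k ∣ f w := by
  obtain ⟨z, hzp, hz3⟩ := claimA_root hp3 k (w:R) hw
  have hzu : IsUnit z :=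
    isUnit_of_sub_one (dvd_trans (dvd_pow_self (p:R) (by omega : (3:ℕ) ≠ 0)) hz3)
  have hw' : hzu.unit ^ (p^k) = w := by
    apply Units.ext
    rw [Units.val_pow_eq_pow_val, hzu.unit_spec, hzp]
  rw [← hw', f_pow hf, nsmul_eq_mul, Nat.cast_pow]
  exact Dvd.dvd.mul_right dvd_rfl _

end fLemmas

end PHomAux

namespace PHomAux
variable {p : ℕ} [hfp : Fact p.Prime]
local notation "R" => PadicInt p

lemma isUnit_of_not_dvd {x : R} (h : ¬ (p:R) ∣ x) : IsUnit x := by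
  by_contra hnot
  have hmem : x ∈ nonunits R := hnot
  have hz : x ∈ IsLocalRing.maximalIdeal R := hmem
  rw [PadicInt.maximalIdeal_eq_span_p, Ideal.mem_span_singleton] at hz
  exact h hz

lemma p_not_dvd_one : ¬ (p:R) ∣ (1:R) := fun h =>
  PadicInt.irreducible_p.not_isUnit (isUnit_of_dvd_one h)

lemma p_sub_one_unit : IsUnit (((p-1 : ℕ) : R)) := by
  apply isUnit_of_not_dvd
  intro h
  have hc : ((p-1:ℕ) : R) = (p:R) - 1 := by
    push_cast [Nat.cast_sub hfp.out.one_le]; ring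
  rw [hc] at h
  apply p_not_dvd_one (p := p)
  have : (p:R) ∣ (p:R) - ((p:R) - 1) := (dvd_refl _).sub h
  simpa using this

noncomputable def uOne : (PadicInt p)ˣ :=
  (isUnit_of_sub_one (p := p) (z := 1 + (p:R)) (by simp)).unit

lemma uOne_val : ((uOne : (PadicInt p)ˣ) : R) = 1 + (p:R) := IsUnit.unit_spec _

lemma Llog_uOne_unit (hp3 : 3 ≤ p) : IsUnit (Llog hp3 (uOne (p := p))) := by
  apply isUnit_of_not_dvd
  intro hdvd
  set a0 : R := aSeq hp3 (uOne (p := p)) 0 with ha0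
  have hspec : ((1:R) + (p:R))^(p-1) = 1 + (p:R) * a0 := by
    have := aSeq_spec hp3 (uOne (p := p)) 0
    rw [uOne_val] at this
    simpa using this
  have hsq := sq_dvd_pow_sub ((p:R)) (p-1)
  rw [hspec] at hsq
  have h2 : (p:R)^2 ∣ (p:R) * (a0 - ((p-1:ℕ):R)) := by
    have e : (p:R) * (a0 - ((p-1:ℕ):R)) = (1 + (p:R)*a0) - (1 + ((p-1:ℕ):R) * (p:R)) := by ring
    rw [e]; exact hsq
  have h3 : (p:R) ∣ a0 - ((p-1:ℕ):R) := by
    have : (p:R) * (p:R) ∣ (p:R) * (a0 - ((p-1:ℕ):R)) := by rw [← sq]; exact h2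
    exact (mul_dvd_mul_iff_left (p_cast_ne_zero (p := p))).1 this
  have h5 : (p:R) ∣ Llog hp3 (uOne (p := p)) - a0 := by
    simpa using (Llog_spec hp3 (uOne (p := p)) 0)
  have h4 : (p:R) ∣ a0 := by simpa using (hdvd.sub h5)
  have h6 : (p:R) ∣ ((p-1:ℕ):R) := by simpa using (h4.sub h3)
  have hc : ((p-1:ℕ) : R) = (p:R) - 1 := by
    push_cast [Nat.cast_sub hfp.out.one_le]; ring
  rw [hc] at h6
  apply p_not_dvd_one (p := p)
  have : (p:R) ∣ (p:R) - ((p:R) - 1) := (dvd_refl _).sub h6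
  simpa using this

end PHomAux

namespace PHomAux
variable {p : ℕ} [hfp : Fact p.Prime]
local notation "R" => PadicInt p

lemma key_ident (hp3 : 3 ≤ p) {f : (PadicInt p)ˣ → PadicInt p}
    (hf : ∀ x y : (PadicInt p)ˣ, f (x * y) = f x + f y) (u : (PadicInt p)ˣ) :
    Llog hp3 (uOne (p := p)) * f u = f (uOne (p := p)) * Llog hp3 u := by
  rw [← sub_eq_zero]
  apply eq_zero_of_forall_dvd
  intro n
  set u₀ : (PadicInt p)ˣ := uOne (p := p) with hu₀
  set α : R := aSeq hp3 u (n+1) with hα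
  set β : R := aSeq hp3 u₀ (n+1) with hβ
  set na : ℕ := (α.appr (n+2)) with hna
  set nb : ℕ := (β.appr (n+2)) with hnb
  set X : (PadicInt p)ˣ := u ^ ((p-1)*p^(n+1)) with hX
  set Y : (PadicInt p)ˣ := u₀ ^ ((p-1)*p^(n+1)) with hY
  have hXv : (X:R) = 1 + (p:R)^(n+2) * α := by
    rw [hX, Units.val_pow_eq_pow_val, aSeq_spec hp3 u (n+1)]
  have hYv : (Y:R) = 1 + (p:R)^(n+2) * β := by
    rw [hY, Units.val_pow_eq_pow_val, aSeq_spec hp3 u₀ (n+1)]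
  -- Step 1
  have happa : (p:R)^(n+2) ∣ α - (na:R) := by
    have := PadicInt.appr_spec (n+2) α
    rwa [Ideal.mem_span_singleton] at this
  have happb : (p:R)^(n+2) ∣ β - (nb:R) := by
    have := PadicInt.appr_spec (n+2) β
    rwa [Ideal.mem_span_singleton] at this
  have hbinX : ((p:R)^(n+2)*α)^2 ∣ (X:R)^nb - (1 + (nb:R)*((p:R)^(n+2)*α)) := by
    rw [hXv]; exact sq_dvd_pow_sub _ nb
  have hbinY : ((p:R)^(n+2)*β)^2 ∣ (Y:R)^na - (1 + (na:R)*((p:R)^(n+2)*β)) := by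
    rw [hYv]; exact sq_dvd_pow_sub _ na
  have hsq : ∀ c : R, (p:R)^(2*n+4) ∣ ((p:R)^(n+2)*c)^2 := by
    intro c
    have : ((p:R)^(n+2)*c)^2 = (p:R)^(2*n+4) * c^2 := by ring
    rw [this]; exact Dvd.dvd.mul_right dvd_rfl _
  have hstep1 : (p:R)^(2*n+4) ∣ (X:R)^nb - (Y:R)^na := by
    have hthird : (p:R)^(2*n+4) ∣ (p:R)^(n+2) * ((nb:R)*α - (na:R)*β) := by
      have hd : (p:R)^(n+2) ∣ (nb:R)*α - (na:R)*β := by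
        have e : (nb:R)*α - (na:R)*β
            = ((nb:R) - β)*α - ((na:R) - α)*β := by ring
        rw [e]
        have h1 : (p:R)^(n+2) ∣ (nb:R) - β := by
          simpa [neg_sub] using (dvd_neg.2 happb)
        have h2 : (p:R)^(n+2) ∣ (na:R) - α := by
          simpa [neg_sub] using (dvd_neg.2 happa)
        exact (h1.mul_right α).sub (h2.mul_right β)
      have : (p:R)^(2*n+4) = (p:R)^(n+2) * (p:R)^(n+2) := by rw [← pow_add]; ring_nf
      rw [this]
      exact mul_dvd_mul dvd_rfl hd
    have e : (X:R)^nb - (Y:R)^na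
        = ((X:R)^nb - (1 + (nb:R)*((p:R)^(n+2)*α)))
          - ((Y:R)^na - (1 + (na:R)*((p:R)^(n+2)*β)))
          + (p:R)^(n+2) * ((nb:R)*α - (na:R)*β) := by ring
    rw [e]
    exact ((dvd_trans (hsq α) hbinX).sub (dvd_trans (hsq β) hbinY)).add hthird
  -- Step 2
  set g : (PadicInt p)ˣ := X^nb * (Y^na)⁻¹ with hg
  have hgv : (g:R) = (X:R)^nb * (((Y^na)⁻¹ : (PadicInt p)ˣ) : R) := by
    rw [hg, Units.val_mul, Units.val_pow_eq_pow_val]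
  have hinv : (((Y^na)⁻¹ : (PadicInt p)ˣ) : R) * ((Y:R)^na) = 1 := by
    have := Units.inv_mul (Y^na)
    rwa [Units.val_pow_eq_pow_val] at this
  have he : ((g:R) - 1) * ((Y:R)^na) = (X:R)^nb - (Y:R)^na := by
    rw [hgv]; linear_combination ((X:R)^nb) * hinv
  have hYunit : IsUnit ((Y:R)^na) := by
    rw [← Units.val_pow_eq_pow_val]; exact (Y^na).isUnit
  have hstep2 : (p:R)^(2*n+4) ∣ (g:R) - 1 := by
    rw [← he] at hstep1
    exact (hYunit.dvd_mul_right).1 hstep1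
  -- Step 3
  have hstep3 : (p:R)^(2*n+1) ∣ f g :=
    claimA hf hp3 (2*n+1) g (show (p:R)^(2*n+1+3) ∣ (g:R) - 1 from hstep2)
  -- Step 4
  have hfg : f g = (nb:R) * f X - (na:R) * f Y := by
    have e1 : f (X^nb) = nb • f X := f_pow hf X nb
    have e2 : f (Y^na) = na • f Y := f_pow hf Y na
    rw [hg, hf, f_inv hf, e1, e2, nsmul_eq_mul, nsmul_eq_mul]
    ring
  have hfX : f X = (((p-1)*p^(n+1) : ℕ) : R) * f u := by
    rw [hX, f_pow hf, nsmul_eq_mul]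
  have hfY : f Y = (((p-1)*p^(n+1) : ℕ) : R) * f u₀ := by
    rw [hY, f_pow hf, nsmul_eq_mul]
  -- Step 5
  set D : R := (nb:R) * f u - (na:R) * f u₀ with hD
  have hstep5 : (p:R)^(2*n+1) ∣ ((p-1:ℕ):R) * ((p:R)^(n+1) * D) := by
    have e : (nb:R) * ((((p-1)*p^(n+1) : ℕ) : R) * f u)
        - (na:R) * ((((p-1)*p^(n+1) : ℕ) : R) * f u₀)
        = ((p-1:ℕ):R) * ((p:R)^(n+1) * D) := by
      rw [hD]; push_cast; ring
    rw [hfg, hfX, hfY, e] at hstep3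
    exact hstep3
  have hstep5' : (p:R)^(2*n+1) ∣ (p:R)^(n+1) * D :=
    ((p_sub_one_unit (p := p)).dvd_mul_left).1 hstep5
  have hDdvd : (p:R)^n ∣ D := by
    have e2 : (p:R)^(2*n+1) = (p:R)^(n+1) * (p:R)^n := by rw [← pow_add]; ring_nf
    rw [e2] at hstep5'
    obtain ⟨c, hc⟩ := hstep5'
    refine ⟨c, ?_⟩
    apply mul_left_cancel₀ (pow_ne_zero (n+1) (p_cast_ne_zero (p := p)))
    rw [hc]; ring
  -- Step 6
  have hLb : (p:R)^n ∣ Llog hp3 u₀ - (nb:R) := by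
    have h1 := Llog_spec hp3 u₀ (n+1)
    have h2 : (p:R)^(n+2) ∣ Llog hp3 u₀ - (nb:R) := by
      have := h1.add happb
      rw [← hβ] at this
      simpa using this
    exact dvd_trans (pow_dvd_pow _ (by omega)) h2
  have hLa : (p:R)^n ∣ Llog hp3 u - (na:R) := by
    have h1 := Llog_spec hp3 u (n+1)
    have h2 : (p:R)^(n+2) ∣ Llog hp3 u - (na:R) := by
      have := h1.add happa
      rw [← hα] at this
      simpa using this
    exact dvd_trans (pow_dvd_pow _ (by omega)) h2
  have efinal : Llog hp3 u₀ * f u - f u₀ * Llog hp3 u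
      = D + (Llog hp3 u₀ - (nb:R)) * f u - (Llog hp3 u - (na:R)) * f u₀ := by
    rw [hD]; ring
  rw [efinal]
  exact (hDdvd.add (hLb.mul_right (f u))).sub (hLa.mul_right (f u₀))

end PHomAux

namespace PHomAux
variable {p : ℕ} [hfp : Fact p.Prime]
local notation "R" => PadicInt p

lemma Llog_lip (hp3 : 3 ≤ p) (u v : (PadicInt p)ˣ) {m : ℕ}
    (h : (p:R)^(m+1) ∣ (u:R) - (v:R)) : (p:R)^m ∣ Llog hp3 u - Llog hp3 v := by
  set w : (PadicInt p)ˣ := v⁻¹ * u with hw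
  have hvw : v * w = u := by rw [hw, mul_inv_cancel_left]
  have hL : Llog hp3 u - Llog hp3 v = Llog hp3 w := by
    rw [← hvw, Llog_add hp3]; ring
  rw [hL]
  apply Llog_small hp3
  have hwv : (w:R) - 1 = ((v⁻¹ : (PadicInt p)ˣ) : R) * ((u:R) - (v:R)) := by
    rw [hw, Units.val_mul, mul_sub]
    have : ((v⁻¹ : (PadicInt p)ˣ) : R) * (v:R) = 1 := Units.inv_mul v
    rw [this]
  rw [hwv]
  exact h.mul_left _

lemma Llog_continuous (hp3 : 3 ≤ p) : Continuous (Llog hp3 : (PadicInt p)ˣ → R) := by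
  rw [continuous_iff_continuousAt]
  intro v
  rw [ContinuousAt, Metric.tendsto_nhds]
  intro ε hε
  obtain ⟨m, hm⟩ := (tendsto_pow_inv (p := p).eventually (gt_mem_nhds hε)).exists
  have hopen : {u : (PadicInt p)ˣ | ‖(u:R) - (v:R)‖ < (p:ℝ)^(-(m:ℤ))} ∈ nhds v := by
    have hc : Continuous (fun u : (PadicInt p)ˣ => (u:R)) := Units.continuous_val
    have : IsOpen {x : R | ‖x - (v:R)‖ < (p:ℝ)^(-(m:ℤ))} := by
      simpa [Metric.ball, dist_eq_norm] using
        Metric.isOpen_ball (x := (v:R)) (ε := (p:ℝ)^(-(m:ℤ)))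
    refine (this.preimage hc).mem_nhds ?_
    simp only [Set.mem_preimage, Set.mem_setOf_eq, sub_self, norm_zero]
    positivity
  filter_upwards [hopen] with u hu
  have hdvd : (p:R)^(m+1) ∣ (u:R) - (v:R) := dvd_of_norm_lt hu
  have hL : (p:R)^m ∣ Llog hp3 u - Llog hp3 v := Llog_lip hp3 u v hdvd
  have := (dvd_iff_norm m _).1 hL
  rw [dist_eq_norm]
  exact lt_of_le_of_lt this hm

end PHomAux


open PHomAux

/-- Let `p` be an odd prime.  Every group homomorphism from the unit group `ℤ_pˣ` (written
multiplicatively) to the additive group `(ℤ_p, +)` is continuous for the `p`-adic topologies,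
and the abelian group of all such homomorphisms, with `ℤ_p` acting by pointwise scalar
multiplication on the target, is a free `ℤ_p`-module of rank `1`: there is a homomorphism
`f₀ : ℤ_pˣ → ℤ_p` such that every homomorphism `f : ℤ_pˣ → ℤ_p` is uniquely of the form
`c • f₀` for some `c ∈ ℤ_p`. -/
theorem padicUnits_hom_to_padicInt_continuous_and_free_rank_one
    (p : ℕ) [Fact p.Prime] (hp : Odd p) :
    (∀ f : (PadicInt p)ˣ → PadicInt p,
        (∀ x y : (PadicInt p)ˣ, f (x * y) = f x + f y) → Continuous f) ∧
    ∃ f₀ : (PadicInt p)ˣ → PadicInt p,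
      (∀ x y : (PadicInt p)ˣ, f₀ (x * y) = f₀ x + f₀ y) ∧
      ∀ f : (PadicInt p)ˣ → PadicInt p,
        (∀ x y : (PadicInt p)ˣ, f (x * y) = f x + f y) →
          ∃! c : PadicInt p, f = fun x => c * f₀ x := by
  have hp2 : 2 ≤ p := (Fact.out (p := p.Prime)).two_le
  have hodd : p % 2 = 1 := Nat.odd_iff.1 hp
  have hp3 : 3 ≤ p := by omega
  set u₀ : (PadicInt p)ˣ := uOne (p := p) with hu₀
  have hLu : IsUnit (Llog hp3 u₀) := Llog_uOne_unit (p := p) hp3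
  set ε : (PadicInt p)ˣ := hLu.unit with hε
  have hεv : (ε : PadicInt p) = Llog hp3 u₀ := hLu.unit_spec
  have hid : ∀ (f : (PadicInt p)ˣ → PadicInt p),
      (∀ x y : (PadicInt p)ˣ, f (x*y) = f x + f y) →
      ∀ u, f u = (f u₀ * ((ε⁻¹ : (PadicInt p)ˣ) : PadicInt p)) * Llog hp3 u := by
    intro f hf u
    have hk := key_ident hp3 hf u
    have hinv : ((ε⁻¹ : (PadicInt p)ˣ) : PadicInt p) * (ε : PadicInt p) = 1 :=
      Units.inv_mul ε
    calc f u = ((ε⁻¹ : (PadicInt p)ˣ) : PadicInt p) * ((ε : PadicInt p) * f u) := by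
          rw [← mul_assoc, hinv, one_mul]
    _ = ((ε⁻¹ : (PadicInt p)ˣ) : PadicInt p) * (f u₀ * Llog hp3 u) := by rw [hεv, hk]
    _ = (f u₀ * ((ε⁻¹ : (PadicInt p)ˣ) : PadicInt p)) * Llog hp3 u := by ring
  constructor
  · intro f hf
    have hfe : f = fun u => (f u₀ * ((ε⁻¹ : (PadicInt p)ˣ) : PadicInt p)) * Llog hp3 u :=
      funext (hid f hf)
    rw [hfe]
    exact continuous_const.mul (Llog_continuous hp3)
  · refine ⟨fun u => Llog hp3 u, fun x y => Llog_add hp3 x y, ?_⟩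
    intro f hf
    refine ⟨f u₀ * ((ε⁻¹ : (PadicInt p)ˣ) : PadicInt p), funext (hid f hf), ?_⟩
    intro c hc
    have h1 : f u₀ = c * Llog hp3 u₀ := congrFun hc u₀
    have h2 : f u₀ = (f u₀ * ((ε⁻¹ : (PadicInt p)ˣ) : PadicInt p)) * Llog hp3 u₀ :=
      hid f hf u₀
    exact mul_right_cancel₀ hLu.ne_zero (h1.symm.trans h2)
end

section
/- Let p be an odd prime. Consider the evaluation homomorphism ev : ℤ_pˣ → Hom(Hom(ℤ_pˣ, ℤ_p), ℤ_p) sending x to the functional f ↦ f(x), where Hom(ℤ_pˣ, ℤ_p) denotes the group of group homomorphisms from the multiplicative group ℤ_pˣ to the additive group ℤ_p, and the outer Hom is taken in abelian groups. Then ev is surjective, and its kernel is exactly the torsion subgroup of ℤ_pˣ, namely {x ∈ ℤ_pˣ : x^(p−1) = 1}. -/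
open Filter Topology

namespace PadicDD

variable {p : ℕ} [hp : Fact p.Prime]

lemma norm_natCast (n : ℕ) (hn : n ≠ 0) :
    ‖(n : ℤ_[p])‖ = (p : ℝ) ^ (-(padicValNat p n : ℤ)) := by
  have h1 : ((n : ℤ_[p]) : ℚ_[p]) = (n : ℚ_[p]) := by push_cast; ring
  have h2 : (n : ℚ_[p]) ≠ 0 := Nat.cast_ne_zero.mpr hn
  rw [PadicInt.norm_def, h1, Padic.norm_eq_zpow_neg_valuation h2, Padic.valuation_natCast]

lemma not_dvd_one_add : ¬ p ∣ 1 + p := by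
  rw [Nat.dvd_add_self_right]
  exact Nat.Prime.not_dvd_one hp.out

/-- The key LTE estimate. -/
lemma norm_pow_sub_one (hodd : Odd p) (m : ℕ) :
    ‖((1 + p : ℕ) : ℤ_[p]) ^ m - 1‖ = (p : ℝ)⁻¹ * ‖(m : ℤ_[p])‖ := by
  rcases eq_or_ne m 0 with rfl | hm
  · simp
  have h2 : 1 < (1 + p) ^ m := Nat.one_lt_pow hm (by have := hp.out.two_le; omega)
  have hcast : ((1 + p : ℕ) : ℤ_[p]) ^ m - 1 = (((1 + p)^m - 1 : ℕ) : ℤ_[p]) := by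
    push_cast [Nat.cast_sub h2.le]; ring
  have hne : (1 + p)^m - 1 ≠ 0 := by omega
  have hval : padicValNat p ((1 + p)^m - 1) = 1 + padicValNat p m := by
    have h := padicValNat.pow_sub_pow (x := 1 + p) (y := 1) hodd
      (by have := hp.out.two_le; omega) (by simp) not_dvd_one_add hm
    simp only [one_pow] at h
    rw [h, show 1 + p - 1 = p by omega, padicValNat_self]
  rw [hcast, norm_natCast _ hne, hval, norm_natCast _ hm]
  have hposp : (0:ℝ) < p := by exact_mod_cast hp.out.pos
  rw [show (-(((1:ℕ) + padicValNat p m : ℕ) : ℤ)) = (-1) + (-(padicValNat p m : ℤ)) by push_cast; ring,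
    zpow_add₀ (ne_of_gt hposp), zpow_neg_one]

lemma norm_one_add_p : ‖((1 + p : ℕ) : ℤ_[p])‖ = 1 := by
  rw [norm_natCast _ (by omega), padicValNat.eq_zero_of_not_dvd not_dvd_one_add]
  simp

lemma norm_pow_sub_pow (hodd : Odd p) (k l : ℕ) :
    ‖((1 + p : ℕ) : ℤ_[p]) ^ k - ((1 + p : ℕ) : ℤ_[p]) ^ l‖
      = (p : ℝ)⁻¹ * ‖(k : ℤ_[p]) - (l : ℤ_[p])‖ := by
  -- wlog l ≤ k
  rcases le_total l k with h | h
  · obtain ⟨d, rfl⟩ := Nat.exists_eq_add_of_le h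
    have : ((1 + p : ℕ) : ℤ_[p]) ^ (l + d) - ((1 + p : ℕ) : ℤ_[p]) ^ l
        = ((1 + p : ℕ) : ℤ_[p]) ^ l * (((1 + p : ℕ) : ℤ_[p]) ^ d - 1) := by ring
    rw [this, norm_mul, norm_pow, norm_one_add_p, one_pow, one_mul, norm_pow_sub_one hodd]
    congr 1
    have : ((l : ℤ_[p]) + d) - l = (d : ℤ_[p]) := by ring
    push_cast
    rw [this]
  · obtain ⟨d, rfl⟩ := Nat.exists_eq_add_of_le h
    have e1 : ((1 + p : ℕ) : ℤ_[p]) ^ k - ((1 + p : ℕ) : ℤ_[p]) ^ (k + d)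
        = -(((1 + p : ℕ) : ℤ_[p]) ^ k * (((1 + p : ℕ) : ℤ_[p]) ^ d - 1)) := by ring
    rw [e1, norm_neg, norm_mul, norm_pow, norm_one_add_p, one_pow, one_mul,
      norm_pow_sub_one hodd]
    congr 1
    have : ((k : ℤ_[p])) - (k + d) = -(d : ℤ_[p]) := by ring
    push_cast
    rw [this, norm_neg]

lemma tendsto_pow_neg_nhds_zero :
    Tendsto (fun n : ℕ => (p : ℝ) ^ (-(n : ℤ))) atTop (𝓝 0) := by
  have h1 : (0:ℝ) ≤ (p:ℝ)⁻¹ := by positivity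
  have h2 : (p:ℝ)⁻¹ < 1 := by
    rw [inv_lt_one_iff₀]
    right
    exact_mod_cast hp.out.one_lt
  have := tendsto_pow_atTop_nhds_zero_of_lt_one h1 h2
  refine this.congr (fun n => ?_)
  rw [inv_pow, ← zpow_natCast, ← zpow_neg]

lemma eq_zero_of_forall_norm_le {w : ℤ_[p]} (h : ∀ n : ℕ, ‖w‖ ≤ (p : ℝ) ^ (-(n : ℤ))) :
    w = 0 := by
  have : ‖w‖ ≤ 0 := ge_of_tendsto tendsto_pow_neg_nhds_zero (Eventually.of_forall h)
  simpa using le_antisymm this (norm_nonneg w)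

lemma norm_sub_appr (a : ℤ_[p]) (n : ℕ) : ‖a - a.appr n‖ ≤ (p : ℝ) ^ (-(n : ℤ)) :=
  (PadicInt.norm_le_pow_iff_mem_span_pow _ n).mpr (PadicInt.appr_spec n a)

lemma norm_sub_le_max (x y z : ℤ_[p]) : ‖x - y‖ ≤ max ‖x - z‖ ‖z - y‖ := by
  have : x - y = (x - z) + (z - y) := by ring
  rw [this]
  exact PadicInt.nonarchimedean _ _

lemma norm_eq_of_norm_sub_lt {x y : ℤ_[p]} (h : ‖x - y‖ < ‖x‖) : ‖y‖ = ‖x‖ := by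
  have h1 : ‖y‖ ≤ ‖x‖ := by
    have e : y = x + (y - x) := by ring
    calc ‖y‖ = ‖x + (y - x)‖ := by rw [← e]
      _ ≤ max ‖x‖ ‖y - x‖ := PadicInt.nonarchimedean _ _
      _ ≤ ‖x‖ := max_le le_rfl (by rw [← norm_neg, neg_sub]; exact h.le)
  rcases lt_or_eq_of_le h1 with h2 | h2
  · exfalso
    have : ‖x‖ ≤ max ‖x - y‖ ‖y‖ := by
      have e : x = (x - y) + y := by ring
      nth_rewrite 1 [e]
      exact PadicInt.nonarchimedean _ _
    rcases max_cases ‖x - y‖ ‖y‖ with ⟨he, _⟩ | ⟨he, _⟩ <;> rw [he] at this <;> linarith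
  · exact h2

lemma norm_appr_diff (a : ℤ_[p]) {n m N : ℕ} (hn : N ≤ n) (hm : N ≤ m) :
    ‖(a.appr n : ℤ_[p]) - a.appr m‖ ≤ (p : ℝ) ^ (-(N : ℤ)) := by
  refine le_trans (norm_sub_le_max _ _ a) (max_le ?_ ?_)
  · rw [← norm_neg, neg_sub]
    exact le_trans (norm_sub_appr a n)
      (zpow_le_zpow_right₀ (by exact_mod_cast hp.out.one_lt.le) (by omega))
  · exact le_trans (norm_sub_appr a m)
      (zpow_le_zpow_right₀ (by exact_mod_cast hp.out.one_lt.le) (by omega))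

lemma exists_phi (hodd : Odd p) (a : ℤ_[p]) :
    ∃ y : ℤ_[p], Tendsto (fun n => ((1 + p : ℕ) : ℤ_[p]) ^ a.appr n) atTop (𝓝 y) := by
  apply cauchySeq_tendsto_of_complete
  refine cauchySeq_of_le_tendsto_0 (fun N => (p : ℝ) ^ (-(N : ℤ))) ?_ ?_
  · intro n m N hn hm
    rw [dist_eq_norm, norm_pow_sub_pow hodd]
    have h1 : (p:ℝ)⁻¹ ≤ 1 := by
      rw [inv_le_one_iff₀]; right; exact_mod_cast hp.out.one_lt.le
    calc (p:ℝ)⁻¹ * ‖(a.appr n : ℤ_[p]) - a.appr m‖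
        ≤ 1 * ‖(a.appr n : ℤ_[p]) - a.appr m‖ := by
          apply mul_le_mul_of_nonneg_right h1 (norm_nonneg _)
      _ = ‖(a.appr n : ℤ_[p]) - a.appr m‖ := one_mul _
      _ ≤ (p : ℝ) ^ (-(N : ℤ)) := norm_appr_diff a hn hm
  · exact tendsto_pow_neg_nhds_zero

noncomputable def phi (hodd : Odd p) (a : ℤ_[p]) : ℤ_[p] :=
  Classical.choose (exists_phi hodd a)

lemma phi_tendsto (hodd : Odd p) (a : ℤ_[p]) :
    Tendsto (fun n => ((1 + p : ℕ) : ℤ_[p]) ^ a.appr n) atTop (𝓝 (phi hodd a)) :=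
  Classical.choose_spec (exists_phi hodd a)

/-- Master lemma: any sequence of naturals converging to `a` computes `phi a`. -/
lemma tendsto_pow_phi (hodd : Odd p) {a : ℤ_[p]} {m : ℕ → ℕ}
    (h : Tendsto (fun n => ‖(m n : ℤ_[p]) - a‖) atTop (𝓝 0)) :
    Tendsto (fun n => ((1 + p : ℕ) : ℤ_[p]) ^ m n) atTop (𝓝 (phi hodd a)) := by
  have hd : Tendsto (fun n => ((1 + p : ℕ) : ℤ_[p]) ^ m n
      - ((1 + p : ℕ) : ℤ_[p]) ^ a.appr n) atTop (𝓝 0) := by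
    rw [tendsto_zero_iff_norm_tendsto_zero]
    apply squeeze_zero (fun n => norm_nonneg _)
      (g := fun n => ‖(m n : ℤ_[p]) - a‖ + (p : ℝ) ^ (-(n : ℤ)))
    · intro n
      rw [norm_pow_sub_pow hodd]
      have h1 : (p:ℝ)⁻¹ ≤ 1 := by
        rw [inv_le_one_iff₀]; right; exact_mod_cast hp.out.one_lt.le
      have h2 : ‖(m n : ℤ_[p]) - a.appr n‖ ≤ ‖(m n : ℤ_[p]) - a‖ + (p : ℝ) ^ (-(n : ℤ)) := by
        have e : (m n : ℤ_[p]) - a.appr n = ((m n : ℤ_[p]) - a) + (a - a.appr n) := by ring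
        rw [e]
        exact le_trans (norm_add_le _ _) (by gcongr; exact norm_sub_appr a n)
      calc (p:ℝ)⁻¹ * ‖(m n : ℤ_[p]) - a.appr n‖
          ≤ 1 * ‖(m n : ℤ_[p]) - a.appr n‖ :=
            mul_le_mul_of_nonneg_right h1 (norm_nonneg _)
        _ = ‖(m n : ℤ_[p]) - a.appr n‖ := one_mul _
        _ ≤ _ := h2
    · simpa using h.add tendsto_pow_neg_nhds_zero
  have := hd.add (phi_tendsto hodd a)
  simpa using this

lemma phi_natCast (hodd : Odd p) (k : ℕ) :
    phi hodd (k : ℤ_[p]) = ((1 + p : ℕ) : ℤ_[p]) ^ k := by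
  have h := tendsto_pow_phi hodd (a := (k : ℤ_[p])) (m := fun _ => k)
    (by simp only [sub_self, norm_zero]; exact tendsto_const_nhds)
  exact tendsto_nhds_unique h tendsto_const_nhds

lemma phi_zero (hodd : Odd p) : phi hodd 0 = 1 := by
  simpa using phi_natCast hodd 0

lemma phi_one_eq (hodd : Odd p) : phi hodd 1 = ((1 + p : ℕ) : ℤ_[p]) := by
  simpa using phi_natCast hodd 1

lemma phi_add (hodd : Odd p) (a b : ℤ_[p]) :
    phi hodd (a + b) = phi hodd a * phi hodd b := by
  have h1 : Tendsto (fun n => ((1 + p : ℕ) : ℤ_[p]) ^ (a.appr n + b.appr n)) atTop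
      (𝓝 (phi hodd (a + b))) := by
    apply tendsto_pow_phi hodd
    apply squeeze_zero (fun n => norm_nonneg _)
      (g := fun n : ℕ => (p:ℝ)^(-(n:ℤ)) + (p:ℝ)^(-(n:ℤ)))
    · intro n
      push_cast
      have e : ((a.appr n : ℤ_[p]) + b.appr n) - (a+b)
          = ((a.appr n : ℤ_[p]) - a) + ((b.appr n : ℤ_[p]) - b) := by ring
      rw [e]
      refine le_trans (norm_add_le _ _) ?_
      gcongr
      · rw [← norm_neg, neg_sub]; exact norm_sub_appr a n
      · rw [← norm_neg, neg_sub]; exact norm_sub_appr b n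
    · simpa using tendsto_pow_neg_nhds_zero.add tendsto_pow_neg_nhds_zero
  have h2 : Tendsto (fun n => ((1 + p : ℕ) : ℤ_[p]) ^ (a.appr n + b.appr n)) atTop
      (𝓝 (phi hodd a * phi hodd b)) := by
    have := (phi_tendsto hodd a).mul (phi_tendsto hodd b)
    exact this.congr (fun n => by rw [pow_add])
  exact tendsto_nhds_unique h1 h2

lemma norm_phi_sub_one (hodd : Odd p) (a : ℤ_[p]) :
    ‖phi hodd a - 1‖ = (p : ℝ)⁻¹ * ‖a‖ := by
  rcases eq_or_ne a 0 with rfl | ha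
  · simp [phi_zero hodd]
  -- the norms of the approximants are eventually constant
  have hnorm : Tendsto (fun n => ‖((1 + p : ℕ) : ℤ_[p]) ^ a.appr n - 1‖) atTop
      (𝓝 ‖phi hodd a - 1‖) :=
    ((phi_tendsto hodd a).sub tendsto_const_nhds).norm
  have hapos : 0 < ‖a‖ := norm_pos_iff.mpr ha
  obtain ⟨N, hN⟩ : ∃ N : ℕ, (p : ℝ) ^ (-(N : ℤ)) < ‖a‖ :=
    ((tendsto_pow_neg_nhds_zero (p := p)).eventually (gt_mem_nhds hapos)).exists
  have hconst : ∀ n, N ≤ n → ‖((1 + p : ℕ) : ℤ_[p]) ^ a.appr n - 1‖ = (p : ℝ)⁻¹ * ‖a‖ := by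
    intro n hn
    have h1 : ‖a - a.appr n‖ < ‖a‖ :=
      lt_of_le_of_lt (le_trans (norm_sub_appr a n)
        (zpow_le_zpow_right₀ (by exact_mod_cast hp.out.one_lt.le) (by omega : -(n:ℤ) ≤ -(N:ℤ)))) hN
    have h2 : ‖(a.appr n : ℤ_[p])‖ = ‖a‖ := norm_eq_of_norm_sub_lt h1
    have h3 := norm_pow_sub_one hodd (a.appr n)
    rw [h3, h2]
  exact tendsto_nhds_unique hnorm
    (tendsto_const_nhds.congr' (by
      filter_upwards [eventually_ge_atTop N] with n hn
      exact (hconst n hn).symm))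

lemma phi_eq_one_iff (hodd : Odd p) {a : ℤ_[p]} : phi hodd a = 1 ↔ a = 0 := by
  constructor
  · intro h
    have := norm_phi_sub_one hodd a
    rw [h, sub_self, norm_zero] at this
    have hppos : (0:ℝ) < (p:ℝ)⁻¹ := by
      have : (0:ℝ) < p := by exact_mod_cast hp.out.pos
      positivity
    have : ‖a‖ = 0 := by
      rcases mul_eq_zero.mp this.symm with h' | h'
      · exact absurd h' (ne_of_gt hppos)
      · exact h'
    simpa using this
  · rintro rfl; exact phi_zero hodd

lemma isUnit_phi (hodd : Odd p) (a : ℤ_[p]) : IsUnit (phi hodd a) := by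
  apply IsUnit.of_mul_eq_one (phi hodd (-a))
  rw [← phi_add hodd, add_neg_cancel, phi_zero hodd]

lemma phi_injective (hodd : Odd p) {a b : ℤ_[p]} (h : phi hodd a = phi hodd b) : a = b := by
  have h1 : phi hodd (a - b) * phi hodd b = phi hodd b := by
    rw [← phi_add hodd, sub_add_cancel, h]
  have h2 : phi hodd b ≠ 0 := (isUnit_phi hodd b).ne_zero
  have h3 : phi hodd (a - b) = 1 := by
    have := mul_right_cancel₀ h2 (by rw [h1, one_mul] : phi hodd (a - b) * phi hodd b = 1 * phi hodd b)
    exact this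
  exact sub_eq_zero.mp ((phi_eq_one_iff hodd).mp h3)

lemma phi_nsmul (hodd : Odd p) (a : ℤ_[p]) (n : ℕ) :
    phi hodd ((n : ℤ_[p]) * a) = phi hodd a ^ n := by
  induction n with
  | zero => simpa using phi_zero hodd
  | succ k ih =>
    have : (((k:ℕ)+1 : ℤ_[p])) * a = (k : ℤ_[p]) * a + a := by push_cast; ring
    rw [pow_succ, ← ih, ← phi_add hodd]
    push_cast
    rw [this]

lemma norm_phi_sub_one_le (hodd : Odd p) (a : ℤ_[p]) : ‖phi hodd a - 1‖ ≤ (p:ℝ)⁻¹ := by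
  rw [norm_phi_sub_one hodd]
  calc (p:ℝ)⁻¹ * ‖a‖ ≤ (p:ℝ)⁻¹ * 1 := by
        apply mul_le_mul_of_nonneg_left (PadicInt.norm_le_one a) (by positivity)
    _ = (p:ℝ)⁻¹ := mul_one _

lemma exists_pow_approx (hodd : Odd p) {y : ℤ_[p]} (hy1 : ‖y - 1‖ ≤ (p:ℝ)⁻¹) (n : ℕ) :
    ∃ m : ℕ, ‖y - ((1 + p : ℕ) : ℤ_[p]) ^ m‖ ≤ (p:ℝ) ^ (-(n:ℤ)) := by
  rcases Nat.eq_zero_or_pos n with rfl | hn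
  · refine ⟨0, ?_⟩
    simpa using PadicInt.norm_le_one _
  haveI : NeZero (p ^ n) := ⟨pow_ne_zero _ hp.out.ne_zero⟩
  haveI : NeZero (p ^ 1) := ⟨pow_ne_zero _ hp.out.ne_zero⟩
  set π := PadicInt.toZModPow (p := p) n with hπ
  -- `y` and `1+p` are units
  have hyu : IsUnit y := by
    apply PadicInt.isUnit_iff.mpr
    have h1 : ‖y‖ = ‖(1:ℤ_[p])‖ := by
      apply norm_eq_of_norm_sub_lt
      rw [show (1:ℤ_[p]) - y = -(y - 1) by ring, norm_neg, norm_one]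
      calc ‖y - 1‖ ≤ (p:ℝ)⁻¹ := hy1
        _ < 1 := by
            rw [inv_lt_one_iff₀]; right; exact_mod_cast hp.out.one_lt
    simpa using h1
  have hBu : IsUnit ((1 + p : ℕ) : ℤ_[p]) := PadicInt.isUnit_iff.mpr norm_one_add_p
  set Y := (hyu.map π).unit with hY
  set Bu := (hBu.map π).unit with hBu'
  have hYval : (Y : ZMod (p^n)) = π y := rfl
  have hBval : (Bu : ZMod (p^n)) = π ((1 + p : ℕ) : ℤ_[p]) := rfl
  have hdvd : p ^ 1 ∣ p ^ n := pow_dvd_pow p hn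
  set w := ZMod.unitsMap hdvd with hw
  -- membership in span by norm
  have span_iff : ∀ z : ℤ_[p], π z = 0 ↔ ‖z‖ ≤ (p:ℝ) ^ (-(n:ℤ)) := by
    intro z
    rw [PadicInt.norm_le_pow_iff_mem_span_pow, ← PadicInt.ker_toZModPow n, RingHom.mem_ker]
  -- order computation
  have ord : ∀ k : ℕ, (Bu ^ k = 1 ↔ p ^ (n - 1) ∣ k) := by
    intro k
    have e1 : (Bu ^ k = 1) ↔ π (((1 + p : ℕ) : ℤ_[p]) ^ k - 1) = 0 := by
      rw [Units.ext_iff, Units.val_pow_eq_pow_val, hBval, Units.val_one, map_sub, map_pow,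
        map_one, sub_eq_zero]
    rw [e1, span_iff, norm_pow_sub_one hodd]
    have hppos : (0:ℝ) < (p:ℝ) := by exact_mod_cast hp.out.pos
    rw [inv_mul_le_iff₀ hppos]
    have e2 : (p:ℝ) * (p:ℝ)^(-(n:ℤ)) = (p:ℝ) ^ (-((n-1 : ℕ):ℤ)) := by
      rw [show (-((n-1:ℕ):ℤ)) = 1 + (-(n:ℤ)) by push_cast [Nat.cast_sub hn]; ring,
        zpow_add₀ (ne_of_gt hppos), zpow_one]
    rw [e2]
    have e3 : ((k : ℤ_[p])) = ((k : ℤ) : ℤ_[p]) := by push_cast; ring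
    rw [e3, PadicInt.norm_int_le_pow_iff_dvd]
    constructor
    · intro h; exact_mod_cast h
    · intro h; exact_mod_cast h
  have hord : orderOf Bu = p ^ (n - 1) := by
    refine Nat.dvd_antisymm (orderOf_dvd_of_pow_eq_one ((ord _).mpr dvd_rfl))
      ((ord _).mp (pow_orderOf_eq_one Bu))
  -- the kernel subgroup
  set K := (ZMod.unitsMap hdvd).ker with hK
  have hp1cast : ((p : ZMod (p^1))) = 0 := by
    have : ((p^1 : ℕ) : ZMod (p^1)) = 0 := ZMod.natCast_self _
    simpa using this
  have hBK : Bu ∈ K := by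
    rw [MonoidHom.mem_ker, Units.ext_iff, Units.val_one]
    show ((ZMod.unitsMap hdvd Bu : ZMod (p^1))) = 1
    rw [ZMod.unitsMap_def]
    rw [Units.coe_map]
    show ZMod.castHom hdvd (ZMod (p^1)) (Bu : ZMod (p^n)) = 1
    rw [hBval, ZMod.castHom_apply, hπ, PadicInt.cast_toZModPow 1 n hn, map_natCast]
    push_cast [hp1cast]
    ring
  have hYK : Y ∈ K := by
    rw [MonoidHom.mem_ker, Units.ext_iff, Units.val_one]
    show ((ZMod.unitsMap hdvd Y : ZMod (p^1))) = 1
    rw [ZMod.unitsMap_def, Units.coe_map]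
    show ZMod.castHom hdvd (ZMod (p^1)) (Y : ZMod (p^n)) = 1
    rw [hYval, ZMod.castHom_apply, hπ, PadicInt.cast_toZModPow 1 n hn]
    have : PadicInt.toZModPow 1 (y - 1) = 0 := by
      rw [← RingHom.mem_ker, PadicInt.ker_toZModPow]
      rw [← PadicInt.norm_le_pow_iff_mem_span_pow]
      simpa using hy1
    have h2 := this
    rw [map_sub, map_one, sub_eq_zero] at h2
    exact h2
  -- cardinality of the kernel
  have hcardK : Nat.card K = p ^ (n - 1) := by
    have hsurj : Function.Surjective (ZMod.unitsMap hdvd) := ZMod.unitsMap_surjective hdvd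
    have h1 : Nat.card (ZMod (p^n))ˣ = Nat.card ((ZMod (p^n))ˣ ⧸ K) * Nat.card K :=
      Subgroup.card_eq_card_quotient_mul_card_subgroup K
    have h2 : Nat.card ((ZMod (p^n))ˣ ⧸ K) = Nat.card (ZMod (p^1))ˣ :=
      Nat.card_congr (QuotientGroup.quotientKerEquivOfSurjective _ hsurj).toEquiv
    have h3 : Nat.card (ZMod (p^n))ˣ = Nat.totient (p^n) := by
      rw [Nat.card_eq_fintype_card, ZMod.card_units_eq_totient]
    have h4 : Nat.card (ZMod (p^1))ˣ = Nat.totient (p^1) := by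
      rw [Nat.card_eq_fintype_card, ZMod.card_units_eq_totient]
    have h5 : Nat.totient (p^n) = p^(n-1) * (p-1) := Nat.totient_prime_pow hp.out hn
    have h6 : Nat.totient (p^1) = p^0 * (p-1) := Nat.totient_prime_pow hp.out one_pos
    have h7 : (p - 1) ≠ 0 := by have := hp.out.two_le; omega
    rw [h3, h5, h2, h4, h6] at h1
    simp only [pow_zero, one_mul] at h1
    -- h1 : p^(n-1) * (p-1) = (p-1) * Nat.card K
    have : p^(n-1) * (p-1) = Nat.card K * (p-1) := by rw [h1]; ring
    exact (Nat.mul_left_cancel (Nat.pos_of_ne_zero h7) (by rw [Nat.mul_comm (p-1) _, Nat.mul_comm (p-1) _] at *; omega)).symm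
  -- the cyclic subgroup generated by Bu is all of K
  have hzp : Subgroup.zpowers Bu = K := by
    apply Subgroup.eq_of_le_of_card_ge (Subgroup.zpowers_le.mpr hBK)
    rw [hcardK, Nat.card_zpowers, hord]
  -- hence Y is a power of Bu
  have hYz : Y ∈ Subgroup.zpowers Bu := hzp ▸ hYK
  obtain ⟨m, hm⟩ := mem_powers_iff_mem_zpowers.mpr hYz
  refine ⟨m, ?_⟩
  have hval := congrArg (Units.val) hm
  rw [Units.val_pow_eq_pow_val, hBval, hYval] at hval
  refine (span_iff _).mp ?_
  rw [map_sub, map_pow, hval, sub_self]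

lemma phi_surj (hodd : Odd p) {y : ℤ_[p]} (hy1 : ‖y - 1‖ ≤ (p:ℝ)⁻¹) :
    ∃ a : ℤ_[p], phi hodd a = y := by
  have hex : ∀ n : ℕ, ∃ m : ℕ, ‖y - ((1 + p : ℕ) : ℤ_[p]) ^ m‖ ≤ (p:ℝ) ^ (-(n:ℤ)) :=
    fun n => exists_pow_approx hodd hy1 n
  choose m hm using hex
  have hppos : (0:ℝ) < (p:ℝ) := by exact_mod_cast hp.out.pos
  -- the sequence of exponents is Cauchy
  have hcauchy : CauchySeq (fun n => ((m n : ℤ_[p]))) := by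
    refine cauchySeq_of_le_tendsto_0 (fun N => (p:ℝ) * (p:ℝ) ^ (-(N:ℤ))) ?_ ?_
    · intro n k N hn hk
      rw [dist_eq_norm]
      have h1 : ‖((1 + p : ℕ) : ℤ_[p]) ^ m n - ((1 + p : ℕ) : ℤ_[p]) ^ m k‖
          ≤ (p:ℝ) ^ (-(N:ℤ)) := by
        refine le_trans (norm_sub_le_max _ _ y) (max_le ?_ ?_)
        · rw [← norm_neg, neg_sub]
          exact le_trans (hm n)
            (zpow_le_zpow_right₀ (by exact_mod_cast hp.out.one_lt.le) (by omega))
        · exact le_trans (hm k)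
            (zpow_le_zpow_right₀ (by exact_mod_cast hp.out.one_lt.le) (by omega))
      have h2 := norm_pow_sub_pow hodd (m n) (m k)
      have h3 : ‖(m n : ℤ_[p]) - (m k : ℤ_[p])‖
          = (p:ℝ) * ‖((1 + p : ℕ) : ℤ_[p]) ^ m n - ((1 + p : ℕ) : ℤ_[p]) ^ m k‖ := by
        rw [h2]
        field_simp
      rw [h3]
      exact mul_le_mul_of_nonneg_left h1 hppos.le
    · have := tendsto_pow_neg_nhds_zero (p := p)
      simpa using this.const_mul (p:ℝ)
  obtain ⟨a, ha⟩ := cauchySeq_tendsto_of_complete hcauchy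
  refine ⟨a, ?_⟩
  have h4 : Tendsto (fun n => ((1 + p : ℕ) : ℤ_[p]) ^ m n) atTop (𝓝 (phi hodd a)) := by
    apply tendsto_pow_phi hodd
    have := (ha.sub (tendsto_const_nhds (x := a))).norm
    simpa using this
  have h5 : Tendsto (fun n => ((1 + p : ℕ) : ℤ_[p]) ^ m n) atTop (𝓝 y) := by
    rw [show y = y - 0 by ring]
    apply Tendsto.congr (f₁ := fun n => y - (y - ((1 + p : ℕ) : ℤ_[p]) ^ m n))
      (fun n => by ring)
    apply Tendsto.sub tendsto_const_nhds
    rw [tendsto_zero_iff_norm_tendsto_zero]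
    exact squeeze_zero (fun n => norm_nonneg _) hm tendsto_pow_neg_nhds_zero
  exact tendsto_nhds_unique h4 h5

lemma addHom_apply (h : ℤ_[p] →+ ℤ_[p]) (x : ℤ_[p]) : h x = x * h 1 := by
  have key : ∀ n : ℕ, ‖h x - x * h 1‖ ≤ (p:ℝ)^(-(n:ℤ)) := by
    intro n
    obtain ⟨z, hz⟩ := Ideal.mem_span_singleton'.mp (PadicInt.appr_spec n x)
    have hx : x = (x.appr n : ℤ_[p]) + ((p^n : ℕ) : ℤ_[p]) * z := by
      push_cast
      linear_combination -hz
    have hx' : h x = (x.appr n : ℤ_[p]) * h 1 + ((p^n : ℕ) : ℤ_[p]) * h z := by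
      conv_lhs => rw [hx]
      rw [map_add]
      congr 1
      · have := h.map_nsmul (x.appr n) (1:ℤ_[p])
        simpa [nsmul_eq_mul] using this
      · have := h.map_nsmul (p^n) z
        simpa [nsmul_eq_mul] using this
    have hdiff : h x - x * h 1 = ((p^n : ℕ) : ℤ_[p]) * (h z - z * h 1) := by
      linear_combination hx' - h 1 * hx
    rw [hdiff, norm_mul]
    have e1 : ‖((p^n : ℕ) : ℤ_[p])‖ = (p:ℝ)^(-(n:ℤ)) := by
      rw [show ((p^n : ℕ) : ℤ_[p]) = (p:ℤ_[p])^n by push_cast; ring, PadicInt.norm_p_pow]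
    rw [e1]
    calc (p:ℝ)^(-(n:ℤ)) * ‖h z - z * h 1‖ ≤ (p:ℝ)^(-(n:ℤ)) * 1 := by
          apply mul_le_mul_of_nonneg_left (PadicInt.norm_le_one _) (by positivity)
      _ = (p:ℝ)^(-(n:ℤ)) := mul_one _
  exact sub_eq_zero.mp (eq_zero_of_forall_norm_le key)

lemma fermat_unit (x : ℤ_[p]ˣ) : ‖((x : ℤ_[p]))^(p-1) - 1‖ ≤ (p:ℝ)⁻¹ := by
  have h0 : PadicInt.toZMod ((x : ℤ_[p])) ≠ 0 := by
    have : IsUnit (PadicInt.toZMod ((x : ℤ_[p]))) := (Units.isUnit x).map PadicInt.toZMod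
    exact this.ne_zero
  have h1 : PadicInt.toZMod ((x : ℤ_[p]))^(p-1) = 1 := ZMod.pow_card_sub_one_eq_one h0
  have h2 : ((x : ℤ_[p]))^(p-1) - 1 ∈ RingHom.ker (PadicInt.toZMod (p := p)) := by
    rw [RingHom.mem_ker, map_sub, map_pow, map_one, h1, sub_self]
  rw [PadicInt.ker_toZMod, PadicInt.maximalIdeal_eq_span_p] at h2
  have h3 := (PadicInt.norm_le_pow_iff_mem_span_pow (((x : ℤ_[p]))^(p-1) - 1) 1).mpr
    (by simpa using h2)
  simpa using h3

lemma isUnit_pm1 : IsUnit ((p - 1 : ℕ) : ℤ_[p]) := by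
  apply PadicInt.isUnit_iff.mpr
  have hne : (p - 1 : ℕ) ≠ 0 := by have := hp.out.two_le; omega
  rw [norm_natCast _ hne, padicValNat.eq_zero_of_not_dvd]
  · simp
  · intro hdvd
    have := Nat.le_of_dvd (by have := hp.out.two_le; omega) hdvd
    omega

noncomputable def g0 (hodd : Odd p) (x : ℤ_[p]ˣ) : ℤ_[p] :=
  Classical.choose (phi_surj hodd (fermat_unit x))

lemma phi_g0 (hodd : Odd p) (x : ℤ_[p]ˣ) :
    phi hodd (g0 hodd x) = ((x : ℤ_[p]))^(p-1) :=
  Classical.choose_spec (phi_surj hodd (fermat_unit x))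

lemma g0_mul (hodd : Odd p) (x y : ℤ_[p]ˣ) :
    g0 hodd (x * y) = g0 hodd x + g0 hodd y := by
  apply phi_injective hodd
  rw [phi_add hodd, phi_g0, phi_g0, phi_g0, Units.val_mul, mul_pow]

lemma g0_one (hodd : Odd p) : g0 hodd 1 = 0 := by
  have := g0_mul hodd 1 1
  rw [mul_one] at this
  exact left_eq_add.mp this

noncomputable def phiUnit (hodd : Odd p) (a : ℤ_[p]) : ℤ_[p]ˣ := (isUnit_phi hodd a).unit

lemma phiUnit_val (hodd : Odd p) (a : ℤ_[p]) : ((phiUnit hodd a : ℤ_[p])) = phi hodd a :=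
  IsUnit.unit_spec _

lemma phiUnit_add (hodd : Odd p) (a b : ℤ_[p]) :
    phiUnit hodd (a + b) = phiUnit hodd a * phiUnit hodd b := by
  ext
  rw [Units.val_mul, phiUnit_val, phiUnit_val, phiUnit_val, phi_add]

lemma phiUnit_zero (hodd : Odd p) : phiUnit hodd 0 = 1 := by
  ext
  rw [phiUnit_val, phi_zero, Units.val_one]

lemma g0_phiUnit (hodd : Odd p) (a : ℤ_[p]) :
    g0 hodd (phiUnit hodd a) = ((p - 1 : ℕ) : ℤ_[p]) * a := by
  apply phi_injective hodd
  rw [phi_g0, phiUnit_val, phi_nsmul, ]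

lemma g0_eq_zero_iff (hodd : Odd p) (x : ℤ_[p]ˣ) :
    g0 hodd x = 0 ↔ x ^ (p - 1) = 1 := by
  constructor
  · intro h
    ext
    rw [Units.val_pow_eq_pow_val, Units.val_one, ← phi_g0 hodd, h, phi_zero]
  · intro h
    apply phi_injective hodd
    rw [phi_zero, phi_g0]
    have := congrArg (Units.val) h
    rwa [Units.val_pow_eq_pow_val, Units.val_one] at this

lemma pow_unit_eq_phiUnit (hodd : Odd p) (x : ℤ_[p]ˣ) :
    x ^ (p - 1) = phiUnit hodd (g0 hodd x) := by
  ext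
  rw [Units.val_pow_eq_pow_val, phiUnit_val, phi_g0]

/-- `g0` as a homomorphism to `Multiplicative ℤ_[p]`. -/
noncomputable def g0hom (hodd : Odd p) : ℤ_[p]ˣ →* Multiplicative ℤ_[p] where
  toFun x := Multiplicative.ofAdd (g0 hodd x)
  map_one' := by
    show Multiplicative.ofAdd (g0 hodd 1) = 1
    rw [g0_one]
    rfl
  map_mul' x y := by
    show Multiplicative.ofAdd (g0 hodd (x * y))
      = Multiplicative.ofAdd (g0 hodd x) * Multiplicative.ofAdd (g0 hodd y)
    rw [g0_mul hodd x y, ofAdd_add]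

/-- Scalar multiple of a homomorphism into `Multiplicative ℤ_[p]`. -/
noncomputable def smulHom (c : ℤ_[p]) (f : ℤ_[p]ˣ →* Multiplicative ℤ_[p]) :
    ℤ_[p]ˣ →* Multiplicative ℤ_[p] where
  toFun x := Multiplicative.ofAdd (c * (f x).toAdd)
  map_one' := by
    show Multiplicative.ofAdd (c * (f 1).toAdd) = 1
    rw [map_one, toAdd_one, mul_zero, ofAdd_zero]
  map_mul' x y := by
    show Multiplicative.ofAdd (c * (f (x * y)).toAdd)
      = Multiplicative.ofAdd (c * (f x).toAdd) * Multiplicative.ofAdd (c * (f y).toAdd)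
    rw [map_mul f x y, toAdd_mul, mul_add, ofAdd_add]

lemma smulHom_apply (c : ℤ_[p]) (f : ℤ_[p]ˣ →* Multiplicative ℤ_[p]) (x : ℤ_[p]ˣ) :
    smulHom c f x = Multiplicative.ofAdd (c * (f x).toAdd) := rfl

/-- The key structure result: every hom satisfies the proportionality relation. -/
lemma hom_rel (hodd : Odd p) (f : ℤ_[p]ˣ →* Multiplicative ℤ_[p]) (x : ℤ_[p]ˣ) :
    ((p - 1 : ℕ) : ℤ_[p]) * (f x).toAdd
      = g0 hodd x * (f (phiUnit hodd 1)).toAdd := by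
  -- package a ↦ toAdd (f (phiUnit a)) as an additive hom
  set K : ℤ_[p] →+ ℤ_[p] :=
    { toFun := fun a => (f (phiUnit hodd a)).toAdd
      map_zero' := by
        show (f (phiUnit hodd 0)).toAdd = 0
        rw [phiUnit_zero, map_one]
        rfl
      map_add' := fun a b => by
        show (f (phiUnit hodd (a + b))).toAdd = (f (phiUnit hodd a)).toAdd + (f (phiUnit hodd b)).toAdd
        rw [phiUnit_add, map_mul]
        rfl } with hK
  have h1 : (f (x ^ (p-1))).toAdd = K (g0 hodd x) := by
    rw [pow_unit_eq_phiUnit hodd x]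
    rfl
  have h2 : K (g0 hodd x) = g0 hodd x * K 1 := addHom_apply K _
  have h3 : (f (x ^ (p-1))).toAdd = ((p - 1 : ℕ) : ℤ_[p]) * (f x).toAdd := by
    rw [map_pow]
    rw [toAdd_pow]
    rw [nsmul_eq_mul]
  rw [← h3, h1, h2]
  rfl

lemma smulHom_zero (hodd : Odd p) (f : ℤ_[p]ˣ →* Multiplicative ℤ_[p]) :
    smulHom 0 f = 1 := by
  ext x
  show Multiplicative.ofAdd (0 * (f x).toAdd) = (1 : ℤ_[p]ˣ →* Multiplicative ℤ_[p]) x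
  rw [MonoidHom.one_apply, zero_mul, ofAdd_zero]

lemma smulHom_add (a b : ℤ_[p]) (f : ℤ_[p]ˣ →* Multiplicative ℤ_[p]) :
    smulHom (a + b) f = smulHom a f * smulHom b f := by
  ext x
  show Multiplicative.ofAdd ((a + b) * (f x).toAdd)
    = (smulHom a f * smulHom b f) x
  rw [MonoidHom.mul_apply, smulHom_apply, smulHom_apply, add_mul, ofAdd_add]

lemma smulHom_one_eq (f : ℤ_[p]ˣ →* Multiplicative ℤ_[p]) : smulHom 1 f = f := by
  ext x
  show Multiplicative.ofAdd (1 * (f x).toAdd) = f x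
  rw [one_mul, ofAdd_toAdd]

lemma g0hom_apply (hodd : Odd p) (x : ℤ_[p]ˣ) :
    g0hom hodd x = Multiplicative.ofAdd (g0 hodd x) := rfl

end PadicDD

/-- The evaluation homomorphism `ℤ_pˣ → Hom(Hom(ℤ_pˣ, ℤ_p), ℤ_p)`, where `Hom(ℤ_pˣ, ℤ_p)`
is the abelian group of group homomorphisms from the multiplicative group `ℤ_pˣ` to the
additive group of `ℤ_p` (encoded as `(PadicInt p)ˣ →* Multiplicative (PadicInt p)`), and the
outer `Hom` is taken in abelian groups. -/
noncomputable def padicUnitsEval (p : ℕ) [Fact p.Prime] :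
    (PadicInt p)ˣ →*
      (((PadicInt p)ˣ →* Multiplicative (PadicInt p)) →* Multiplicative (PadicInt p)) where
  toFun x :=
    { toFun := fun f => f x
      map_one' := rfl
      map_mul' := fun _ _ => rfl }
  map_one' := by
    ext f
    exact f.map_one
  map_mul' := fun x y => by
    ext f
    exact f.map_mul x y

/-- For `p` an odd prime, the evaluation homomorphism
`ev : ℤ_pˣ → Hom(Hom(ℤ_pˣ, ℤ_p), ℤ_p)` is surjective, and its kernel is exactly the torsion
subgroup `{x ∈ ℤ_pˣ : x ^ (p - 1) = 1}` of `ℤ_pˣ`. -/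
theorem padicUnitsEval_surjective_and_ker (p : ℕ) [Fact p.Prime] (hp : Odd p) :
    Function.Surjective (padicUnitsEval p) ∧
    ∀ x : (PadicInt p)ˣ, padicUnitsEval p x = 1 ↔ x ^ (p - 1) = 1 := by
  have hodd := hp
  obtain ⟨uu, huu⟩ := PadicDD.isUnit_pm1 (p := p)
  set u : ℤ_[p] := ((p - 1 : ℕ) : ℤ_[p]) with hu
  set v : ℤ_[p] := ((uu⁻¹ : ℤ_[p]ˣ) : ℤ_[p]) with hv
  have hv1 : u * v = 1 := by
    rw [← huu, hv, ← Units.val_mul, mul_inv_cancel, Units.val_one]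
  constructor
  · -- surjectivity
    intro F
    set c0 : ℤ_[p] := (F (PadicDD.g0hom hodd)).toAdd with hc0
    have HFlin : ∀ c : ℤ_[p],
        (F (PadicDD.smulHom c (PadicDD.g0hom hodd))).toAdd = c * c0 := by
      set HF : ℤ_[p] →+ ℤ_[p] :=
        { toFun := fun c => (F (PadicDD.smulHom c (PadicDD.g0hom hodd))).toAdd
          map_zero' := by
            show (F (PadicDD.smulHom 0 (PadicDD.g0hom hodd))).toAdd = 0
            rw [PadicDD.smulHom_zero hodd, map_one, toAdd_one]
          map_add' := fun a b => by
            show (F (PadicDD.smulHom (a + b) (PadicDD.g0hom hodd))).toAdd = _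
            rw [PadicDD.smulHom_add, map_mul, toAdd_mul] } with hHF
      intro c
      have h1 : HF c = c * HF 1 := PadicDD.addHom_apply HF c
      have h2 : HF 1 = c0 := by
        show (F (PadicDD.smulHom 1 (PadicDD.g0hom hodd))).toAdd = c0
        rw [PadicDD.smulHom_one_eq]
      rw [h2] at h1
      exact h1
    refine ⟨PadicDD.phiUnit hodd (v * c0), ?_⟩
    ext f
    apply Multiplicative.toAdd.injective
    set c : ℤ_[p] := (f (PadicDD.phiUnit hodd 1)).toAdd with hc
    have hf : ∀ x : ℤ_[p]ˣ, (f x).toAdd = v * c * PadicDD.g0 hodd x := by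
      intro x
      have h := PadicDD.hom_rel hodd f x
      calc (f x).toAdd = (v * u) * (f x).toAdd := by
            rw [mul_comm v u, hv1, one_mul]
        _ = v * (u * (f x).toAdd) := by ring
        _ = v * (PadicDD.g0 hodd x * c) := by rw [h]
        _ = v * c * PadicDD.g0 hodd x := by ring
    have hfeq : f = PadicDD.smulHom (v * c) (PadicDD.g0hom hodd) := by
      ext x
      apply Multiplicative.toAdd.injective
      rw [PadicDD.smulHom_apply]
      rw [toAdd_ofAdd]
      show (f x).toAdd = v * c * (PadicDD.g0hom hodd x).toAdd
      rw [PadicDD.g0hom_apply, toAdd_ofAdd]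
      exact hf x
    have hg0x0 : PadicDD.g0 hodd (PadicDD.phiUnit hodd (v * c0)) = c0 := by
      rw [PadicDD.g0_phiUnit, ← hu, ← mul_assoc, hv1, one_mul]
    show (f (PadicDD.phiUnit hodd (v * c0))).toAdd = (F f).toAdd
    rw [hf, hg0x0, hfeq, HFlin]
  · -- kernel
    intro x
    constructor
    · intro h
      have h1 := DFunLike.congr_fun h (PadicDD.g0hom hodd)
      have h2 : PadicDD.g0 hodd x = 0 := by
        have h3 := congrArg Multiplicative.toAdd h1
        exact h3
      exact (PadicDD.g0_eq_zero_iff hodd x).mp h2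
    · intro h
      ext f
      apply Multiplicative.toAdd.injective
      have h4 : f (x ^ (p - 1)) = 1 := by rw [h, map_one]
      have h5 := congrArg Multiplicative.toAdd h4
      rw [map_pow, toAdd_pow, nsmul_eq_mul, toAdd_one] at h5
      have h6 : (f x).toAdd = 0 := by
        have hune : u ≠ 0 := by rw [← huu]; exact uu.ne_zero
        rcases mul_eq_zero.mp h5 with h' | h'
        · exact absurd h' hune
        · exact h'
      show (f x).toAdd = ((1 : _) : Multiplicative ℤ_[p]).toAdd
      rw [h6]
      rfl
end

section
/- Let p be an odd prime and n ≥ 0 a natural number. Let (ℤ_pˣ)^(pⁿ) denote the subgroup of ℤ_pˣ consisting of all pⁿ-th powers (the range of the group homomorphism x ↦ x^(pⁿ)). Then the quotient group ℤ_pˣ / (ℤ_pˣ)^(pⁿ) is cyclic of order pⁿ. -/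
open Finset in
lemma key_dvd {R : Type*} [CommRing R] {p : ℕ} (hp : p.Prime) (hodd : Odd p)
    (x : R) (hx : (p : R) ∣ x) :
    (p : R) * x ^ 2 ∣ (1 + x) ^ p - 1 - p * x := by
  have hp2 : 2 ≤ p := hp.two_le
  have hp3 : 3 ≤ p := by obtain ⟨m, hm⟩ := hodd; omega
  have hsum : (1 + x) ^ p = ∑ k ∈ range (p + 1), x ^ k * (p.choose k : R) := by
    rw [add_comm, add_pow]; simp
  have hsplit : (1 + x) ^ p - 1 - p * x = ∑ k ∈ Ico 2 (p + 1), x ^ k * (p.choose k : R) := by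
    rw [hsum, range_eq_Ico, Finset.sum_eq_sum_Ico_succ_bot (by omega),
      Finset.sum_eq_sum_Ico_succ_bot (by omega)]
    rw [Nat.choose_zero_right, Nat.choose_one_right]
    push_cast
    ring
  rw [hsplit]
  refine Finset.dvd_sum fun k hk => ?_
  simp only [mem_Ico] at hk
  obtain ⟨hk2, hkp⟩ := hk
  have h2 : x ^ k = x ^ 2 * x ^ (k - 2) := by rw [← pow_add]; congr 1; omega
  have hpd : (p : R) ∣ x ^ (k - 2) * (p.choose k : R) := by
    rcases eq_or_lt_of_le (Nat.lt_succ_iff.mp hkp) with h | h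
    · -- k = p
      have hne : k - 2 ≠ 0 := by omega
      exact Dvd.dvd.mul_right (hx.trans (dvd_pow_self x hne)) _
    · exact Dvd.dvd.mul_left (Nat.cast_dvd_cast (hp.dvd_choose_self (by omega) h)) _
  calc (p : R) * x ^ 2 ∣ x ^ 2 * (x ^ (k - 2) * (p.choose k : R)) := by
        rw [mul_comm (p : R)]; exact mul_dvd_mul_left _ hpd
    _ = x ^ k * (p.choose k : R) := by rw [h2]; ring

variable {p : ℕ} [hpp : Fact p.Prime]

lemma toZMod_eq_one_dvd {v : PadicInt p} (h : PadicInt.toZMod v = 1) :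
    (p : PadicInt p) ∣ v - 1 := by
  have hm : v - 1 ∈ RingHom.ker (PadicInt.toZMod (p := p)) := by
    simp [RingHom.mem_ker, map_sub, h]
  rwa [PadicInt.ker_toZMod, PadicInt.maximalIdeal_eq_span_p,
    Ideal.mem_span_singleton] at hm

lemma frob_fixed (v : PadicInt p) : PadicInt.toZMod (v ^ p) = PadicInt.toZMod v := by
  rw [map_pow, ZMod.pow_card]

lemma norm_one_add_mul {x s : PadicInt p} (hx : ‖x‖ < 1) :
    ‖(1 : PadicInt p) + x * s‖ = 1 := by
  have hxs : ‖x * s‖ < 1 := by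
    calc ‖x * s‖ = ‖x‖ * ‖s‖ := norm_mul _ _
    _ ≤ ‖x‖ * 1 := by gcongr; exact PadicInt.norm_le_one s
    _ < 1 := by simpa using hx
  rw [PadicInt.norm_add_eq_max_of_ne (by rw [norm_one]; exact hxs.ne'),
    norm_one, max_eq_left hxs.le]

lemma pth_root_unity (hodd : Odd p) {t : PadicInt p} (ht : t ^ p = 1) : t = 1 := by
  have h1 : PadicInt.toZMod t = 1 := by rw [← frob_fixed t, ht, map_one]
  obtain ⟨x, hx⟩ : ∃ x, t = 1 + x ∧ (p : PadicInt p) ∣ x := by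
    exact ⟨t - 1, by ring, toZMod_eq_one_dvd h1⟩
  obtain ⟨hx1, hx2⟩ := hx
  obtain ⟨s, hs⟩ := key_dvd hpp.out hodd x hx2
  rw [← hx1, ht] at hs
  -- hs : 1 - 1 - p * x = p * x ^ 2 * s
  have hxnorm : ‖x‖ < 1 := (PadicInt.norm_lt_one_iff_dvd x).mpr hx2
  have heq : (p : PadicInt p) * x * (1 + x * s) = 0 := by
    linear_combination -hs
  have hpne : (p : PadicInt p) ≠ 0 := Nat.cast_ne_zero.mpr hpp.out.ne_zero
  have h1s : (1 : PadicInt p) + x * s ≠ 0 := by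
    intro h
    have := norm_one_add_mul (s := s) hxnorm
    rw [h, norm_zero] at this
    norm_num at this
  have hx0 : x = 0 := by
    rcases mul_eq_zero.mp heq with h | h
    · rcases mul_eq_zero.mp h with h2 | h2
      · exact absurd h2 hpne
      · exact h2
    · exact absurd h h1s
  rw [hx1, hx0, add_zero]

lemma ppow_root_unity (hodd : Odd p) {t : PadicInt p} {k : ℕ} (ht : t ^ p ^ k = 1) : t = 1 := by
  induction k with
  | zero => simpa using ht
  | succ k ih =>
    apply ih
    apply pth_root_unity hodd
    rw [← pow_mul]
    rw [show p ^ k * p = p ^ (k+1) by rw [pow_succ]]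
    exact ht

lemma not_pth_power_one_add_p (hodd : Odd p) (v : PadicInt p) :
    v ^ p ≠ 1 + (p : PadicInt p) := by
  intro hv
  have h1 : PadicInt.toZMod v = 1 := by
    rw [← frob_fixed v, hv, map_add, map_one, map_natCast, ZMod.natCast_self, add_zero]
  obtain ⟨x, hx1, hx2⟩ : ∃ x, v = 1 + x ∧ (p : PadicInt p) ∣ x :=
    ⟨v - 1, by ring, toZMod_eq_one_dvd h1⟩
  obtain ⟨s, hs⟩ := key_dvd hpp.out hodd x hx2
  rw [← hx1, hv] at hs
  -- hs : 1 + p - 1 - p * x = p * x^2 * s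
  have hxnorm : ‖x‖ < 1 := (PadicInt.norm_lt_one_iff_dvd x).mpr hx2
  have hpne : (p : PadicInt p) ≠ 0 := Nat.cast_ne_zero.mpr hpp.out.ne_zero
  have heq : (p : PadicInt p) * (x * (1 + x * s) - 1) = 0 := by
    linear_combination -hs
  have h2 : x * (1 + x * s) = 1 := by
    rcases mul_eq_zero.mp heq with h | h
    · exact absurd h hpne
    · exact sub_eq_zero.mp h
  have : (1:ℝ) ≤ ‖x‖ := by
    have := congrArg norm h2
    rw [norm_mul, norm_one_add_mul hxnorm, mul_one, norm_one] at this
    exact this.symm.le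
  linarith

open Polynomial in
lemma base_root (hodd : Odd p) {z : PadicInt p} (hz : (p : PadicInt p) ^ 2 ∣ z - 1) :
    ∃ w : PadicInt p, (p : PadicInt p) ∣ w - 1 ∧ w ^ p = z := by
  obtain ⟨t, ht⟩ := hz
  set x : PadicInt p := p * t with hxdef
  have hxdvd : (p : PadicInt p) ∣ x := Dvd.intro t rfl
  have hxnorm : ‖x‖ < 1 := (PadicInt.norm_lt_one_iff_dvd x).mpr hxdvd
  set a : PadicInt p := 1 + x with hadef
  obtain ⟨s, hs⟩ := key_dvd hpp.out hodd x hxdvd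
  set F : Polynomial (PadicInt p) := X ^ p - C z with hFdef
  have hFeval : ∀ y : PadicInt p, F.eval y = y ^ p - z := by intro y; simp [hFdef]
  have hFderiv : ∀ y : PadicInt p, F.derivative.eval y = p * y ^ (p - 1) := by
    intro y; simp [hFdef, derivative_X_pow]
  have hanorm : ‖a‖ = 1 := by
    have := norm_one_add_mul (p := p) (s := 1) hxnorm
    rwa [mul_one] at this
  have hr0 : (0:ℝ) < (p:ℝ)⁻¹ := by
    have : (0:ℝ) < (p:ℝ) := by exact_mod_cast hpp.out.pos
    positivity
  have hr1 : (p:ℝ)⁻¹ < 1 := by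
    rw [inv_lt_one_iff₀]
    right
    exact_mod_cast hpp.out.one_lt
  have hderivnorm : ‖F.derivative.eval a‖ = (p:ℝ)⁻¹ := by
    rw [hFderiv, norm_mul, PadicInt.norm_p, norm_pow, hanorm, one_pow, mul_one]
  have hevalval : F.eval a = p * x ^ 2 * s + (p * x - (z - 1)) := by
    rw [hFeval, ← hs]; ring
  have hevala : F.eval a = (p : PadicInt p) ^ 3 * (t ^ 2 * s) := by
    rw [hevalval, ht, hxdef]; ring
  have hevalnorm : ‖F.eval a‖ ≤ (p:ℝ)⁻¹ ^ 3 := by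
    rw [hevala, norm_mul, norm_pow, PadicInt.norm_p]
    exact mul_le_of_le_one_right (by positivity) (PadicInt.norm_le_one _)
  have hnorm : ‖F.eval a‖ < ‖F.derivative.eval a‖ ^ 2 := by
    rw [hderivnorm]
    calc ‖F.eval a‖ ≤ (p:ℝ)⁻¹ ^ 3 := hevalnorm
      _ < (p:ℝ)⁻¹ ^ 2 := by
          exact pow_lt_pow_right_of_lt_one₀ hr0 hr1 (by omega)
  obtain ⟨w, hw1, hw2, -, -⟩ := hensels_lemma hnorm
  refine ⟨w, ?_, by have := hFeval w; rw [← Polynomial.coe_aeval_eq_eval, hw1] at this; exact sub_eq_zero.mp this.symm⟩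
  have hwa : (p : PadicInt p) ∣ w - a := by
    rw [← PadicInt.norm_lt_one_iff_dvd]
    calc ‖w - a‖ < ‖F.derivative.eval a‖ := hw2
      _ = (p:ℝ)⁻¹ := hderivnorm
      _ < 1 := hr1
  have : w - 1 = (w - a) + x := by rw [hadef]; ring
  rw [this]
  exact dvd_add hwa hxdvd

lemma step_root (hodd : Odd p) : ∀ k : ℕ, 1 ≤ k → ∀ {z : PadicInt p},
    (p : PadicInt p) ^ (k + 1) ∣ z - 1 →
    ∃ w : PadicInt p, (p : PadicInt p) ^ k ∣ w - 1 ∧ w ^ p = z := by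
  intro k hk
  induction k, hk using Nat.le_induction with
  | base =>
    intro z hz
    obtain ⟨w, hw1, hw2⟩ := base_root hodd hz
    exact ⟨w, by simpa using hw1, hw2⟩
  | succ k hk ih =>
    intro z hz
    obtain ⟨w, hw1, hw2⟩ := ih ((pow_dvd_pow _ (by omega)).trans hz)
    refine ⟨w, ?_, hw2⟩
    set x : PadicInt p := w - 1 with hxdef
    have hxp : (p : PadicInt p) ∣ x := (dvd_pow_self (p : PadicInt p) (by omega)).trans hw1
    obtain ⟨s, hs⟩ := key_dvd hpp.out hodd x hxp
    have hwx : (1 : PadicInt p) + x = w := by rw [hxdef]; ring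
    rw [hwx, hw2] at hs
    -- hs : z - 1 - p * x = p * x ^ 2 * s
    obtain ⟨c, hc⟩ := hw1
    have hd2 : (p : PadicInt p) ^ (k + 2) ∣ p * x ^ 2 * s := by
      have : (p : PadicInt p) * x ^ 2 * s = p ^ (2 * k + 1) * (c ^ 2 * s) := by
        rw [hc]; ring
      rw [this]
      exact Dvd.dvd.mul_right (pow_dvd_pow _ (by omega)) _
    have hpx : (p : PadicInt p) ^ (k + 2) ∣ p * x := by
      have heq : (p : PadicInt p) * x = (z - 1) - p * x ^ 2 * s := by linear_combination -hs
      rw [heq]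
      exact dvd_sub hz hd2
    have hp0 : (p : PadicInt p) ≠ 0 := Nat.cast_ne_zero.mpr hpp.out.ne_zero
    have : (p : PadicInt p) * (p : PadicInt p) ^ (k + 1) ∣ (p : PadicInt p) * x := by
      rwa [← pow_succ'] 
    exact (mul_dvd_mul_iff_left hp0).mp this

lemma pow_root (hodd : Odd p) : ∀ n : ℕ, ∀ {z : PadicInt p},
    (p : PadicInt p) ^ (n + 1) ∣ z - 1 →
    ∃ w : PadicInt p, (p : PadicInt p) ∣ w - 1 ∧ w ^ p ^ n = z := by
  intro n
  induction n with
  | zero =>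
    intro z hz
    exact ⟨z, by simpa using hz, by simp⟩
  | succ n ih =>
    intro z hz
    obtain ⟨w, hw1, hw2⟩ := step_root hodd (n + 1) (by omega) hz
    obtain ⟨v, hv1, hv2⟩ := ih hw1
    refine ⟨v, hv1, ?_⟩
    rw [pow_succ, pow_mul, hv2, hw2]

lemma units_map_surj (m : ℕ) (hm : 1 ≤ m) :
    Function.Surjective
      (Units.map (PadicInt.toZModPow (p := p) m).toMonoidHom :
        (PadicInt p)ˣ →* (ZMod (p ^ m))ˣ) := by
  intro v
  haveI : NeZero (p ^ m) := ⟨pow_ne_zero _ hpp.out.ne_zero⟩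
  set a : PadicInt p := ((v : ZMod (p ^ m)).val : PadicInt p) with ha
  have hπ : PadicInt.toZModPow m a = (v : ZMod (p ^ m)) := by
    rw [ha, map_natCast, ZMod.natCast_val, ZMod.cast_id]
  have hu : IsUnit a := by
    by_contra hnu
    have : ‖a‖ < 1 := PadicInt.not_isUnit_iff.mp hnu
    obtain ⟨b, hb⟩ := (PadicInt.norm_lt_one_iff_dvd a).mp this
    have : IsUnit ((p : ZMod (p ^ m)) * PadicInt.toZModPow m b) := by
      rw [← map_natCast (PadicInt.toZModPow (p := p) m), ← map_mul, ← hb, hπ]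
      exact v.isUnit
    have hup : IsUnit (p : ZMod (p ^ m)) := isUnit_of_mul_isUnit_left this
    rw [ZMod.isUnit_prime_iff_not_dvd hpp.out] at hup
    exact hup (dvd_pow_self p (by omega))
  refine ⟨hu.unit, Units.ext ?_⟩
  simpa using hπ

lemma ker_le_powRange (hodd : Odd p) (n : ℕ) :
    (Units.map (PadicInt.toZModPow (p := p) (n + 1)).toMonoidHom).ker ≤
      (powMonoidHom (p ^ n) : (PadicInt p)ˣ →* (PadicInt p)ˣ).range := by
  intro u hu
  have h1 : PadicInt.toZModPow (n + 1) (u : PadicInt p) = 1 := by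
    have := congrArg Units.val hu
    simpa using this
  have h2 : (p : PadicInt p) ^ (n + 1) ∣ (u : PadicInt p) - 1 := by
    have : ((u : PadicInt p) - 1) ∈ RingHom.ker (PadicInt.toZModPow (p := p) (n + 1)) := by
      simp [RingHom.mem_ker, map_sub, h1]
    rwa [PadicInt.ker_toZModPow, Ideal.mem_span_singleton] at this
  obtain ⟨w, hw1, hw2⟩ := pow_root hodd n h2
  have hwu : IsUnit w := by
    have h3 : IsUnit (w ^ p ^ n) := hw2 ▸ u.isUnit
    exact (isUnit_pow_iff (pow_ne_zero n hpp.out.ne_zero)).mp h3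
  refine ⟨hwu.unit, Units.ext ?_⟩
  simpa [powMonoidHom] using hw2

omit hpp in
lemma coprime_p_sub_one (h : 2 < p) : Nat.Coprime p (p - 1) := by
  have h2 : p % (p - 1) = 1 := by
    calc p % (p - 1) = ((p - 1) + 1) % (p - 1) := by congr 1; omega
      _ = 1 % (p - 1) := Nat.add_mod_left _ _
      _ = 1 := Nat.mod_eq_of_lt (by omega)
  rw [Nat.Coprime, Nat.gcd_comm, Nat.gcd_rec, h2, Nat.gcd_one_left]

lemma card_quot_zmod (n : ℕ) (hodd : Odd p) :
    Nat.card ((ZMod (p ^ (n + 1)))ˣ ⧸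
      (powMonoidHom (p ^ n) : (ZMod (p ^ (n + 1)))ˣ →* (ZMod (p ^ (n + 1)))ˣ).range) = p ^ n := by
  haveI : NeZero (p ^ (n + 1)) := ⟨pow_ne_zero _ hpp.out.ne_zero⟩
  set Zu := (ZMod (p ^ (n + 1)))ˣ
  have hp1 : 1 < p := hpp.out.one_lt
  have hp3 : 2 < p := by
    obtain ⟨m, hm⟩ := hodd; omega
  have hp1' : 0 < p - 1 := by omega
  have cZ : Nat.card Zu = p ^ n * (p - 1) := by
    rw [Nat.card_eq_fintype_card, ZMod.card_units_eq_totient,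
      Nat.totient_prime_pow hpp.out (Nat.succ_pos n)]
    simp
  set f : Zu →* Zu := powMonoidHom (p ^ n) with hf
  set K := f.ker with hK
  have hKpow : ∀ g : K, g ^ p ^ n = 1 := by
    intro g
    have hg : f (g : Zu) = 1 := g.2
    rw [hf, powMonoidHom_apply] at hg
    exact Subtype.ext (by simpa using hg)
  have hKp : IsPGroup p K := fun g => ⟨n, hKpow g⟩
  have cK : Nat.card K = p ^ n := by
    obtain ⟨j, hj⟩ := IsPGroup.iff_card.mp hKp
    have hdvd : p ^ j ∣ p ^ n * (p - 1) := by
      rw [← hj, ← cZ]; exact Subgroup.card_subgroup_dvd_card K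
    have hcop : Nat.Coprime (p ^ j) (p - 1) := (coprime_p_sub_one hp3).pow_left j
    have hjn : j ≤ n := by
      rw [← Nat.pow_dvd_pow_iff_le_right hp1]
      exact hcop.dvd_of_dvd_mul_right hdvd
    obtain ⟨P⟩ : Nonempty (Sylow p Zu) := Sylow.nonempty
    have cP : Nat.card P = p ^ n := by
      rw [Sylow.card_eq_multiplicity, cZ]
      congr 1
      rw [Nat.factorization_mul (pow_ne_zero _ (by omega)) (by omega)]
      simp only [Finsupp.coe_add, Pi.add_apply]
      rw [hpp.out.factorization_pow, Finsupp.single_eq_same,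
        Nat.factorization_eq_zero_of_not_dvd (Nat.not_dvd_of_pos_of_lt hp1' (by omega))]
      omega
    have hPK : (P : Subgroup Zu) ≤ K := by
      intro x hx
      have h1 : (⟨x, hx⟩ : P) ^ p ^ n = 1 := by rw [← cP]; exact pow_card_eq_one'
      have h2 : x ^ p ^ n = 1 := by simpa using congrArg Subtype.val h1
      exact h2
    have hle : p ^ n ≤ p ^ j := by
      rw [← cP, ← hj]
      exact Subgroup.card_le_of_le hPK
    have hnj : n ≤ j := (Nat.pow_le_pow_iff_right hp1).mp hle
    rw [hj, le_antisymm hjn hnj]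
  have cR : Nat.card f.range = p - 1 := by
    have hiso : Nat.card (Zu ⧸ K) = Nat.card f.range :=
      Nat.card_congr (QuotientGroup.quotientKerEquivRange f).toEquiv
    have hlag := Subgroup.card_eq_card_quotient_mul_card_subgroup K
    rw [cZ, cK, hiso] at hlag
    -- hlag : p ^ n * (p - 1) = Nat.card f.range * p ^ n
    have hpn : 0 < p ^ n := Nat.pow_pos (by omega)
    apply Nat.eq_of_mul_eq_mul_right hpn
    rw [← hlag]; ring
  have hlag2 := Subgroup.card_eq_card_quotient_mul_card_subgroup f.range
  rw [cZ, cR] at hlag2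
  exact Nat.eq_of_mul_eq_mul_right hp1' hlag2.symm

/-- For `p` an odd prime and `n : ℕ`, the quotient of `ℤ_pˣ` by the subgroup of all
`pⁿ`-th powers (the range of the power map `x ↦ x ^ pⁿ`) is cyclic of order `pⁿ`. -/
theorem padicUnits_quot_pow_cyclic (p : ℕ) [Fact p.Prime] (hp : Odd p) (n : ℕ) :
    IsCyclic ((PadicInt p)ˣ ⧸ (powMonoidHom (p ^ n) : (PadicInt p)ˣ →* (PadicInt p)ˣ).range) ∧
    Nat.card ((PadicInt p)ˣ ⧸ (powMonoidHom (p ^ n) : (PadicInt p)ˣ →* (PadicInt p)ˣ).range)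
      = p ^ n := by
  set G := (PadicInt p)ˣ
  set N := (powMonoidHom (p ^ n) : G →* G).range with hN
  set Zu := (ZMod (p ^ (n + 1)))ˣ
  set φ : G →* Zu := Units.map (PadicInt.toZModPow (p := p) (n + 1)).toMonoidHom with hφ
  set R := (powMonoidHom (p ^ n) : Zu →* Zu).range with hR
  set ψ : G →* Zu ⧸ R := (QuotientGroup.mk' R).comp φ with hψ
  have hφs : Function.Surjective φ := units_map_surj (n + 1) (by omega)
  have hψs : Function.Surjective ψ := (QuotientGroup.mk'_surjective R).comp hφs
  have hker : ψ.ker = N := by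
    ext u
    constructor
    · intro hu
      have h1 : φ u ∈ R := by
        rw [MonoidHom.mem_ker, hψ, MonoidHom.comp_apply, QuotientGroup.mk'_apply,
          QuotientGroup.eq_one_iff] at hu
        exact hu
      obtain ⟨v, hv⟩ := h1
      rw [powMonoidHom_apply] at hv
      obtain ⟨g, hg⟩ := hφs v
      have h2 : u * (g ^ p ^ n)⁻¹ ∈ φ.ker := by
        rw [MonoidHom.mem_ker, map_mul, map_inv, map_pow, hg, hv, mul_inv_cancel]
      have h3 : u * (g ^ p ^ n)⁻¹ ∈ N := ker_le_powRange hp n h2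
      have h4 : g ^ p ^ n ∈ N := ⟨g, rfl⟩
      have h5 := mul_mem h3 h4
      simpa using h5
    · rintro ⟨v, rfl⟩
      rw [MonoidHom.mem_ker, powMonoidHom_apply, hψ, MonoidHom.comp_apply, map_pow,
        QuotientGroup.mk'_apply, QuotientGroup.eq_one_iff]
      exact ⟨φ v, rfl⟩
  have e : (G ⧸ N) ≃* (Zu ⧸ R) :=
    (QuotientGroup.quotientMulEquivOfEq hker.symm).trans
      (QuotientGroup.quotientKerEquivOfSurjective ψ hψs)
  have hcard : Nat.card (G ⧸ N) = p ^ n := by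
    rw [Nat.card_congr e.toEquiv]
    exact card_quot_zmod n hp
  haveI : Finite (G ⧸ N) := Nat.finite_of_card_ne_zero (by
    rw [hcard]; exact pow_ne_zero _ (Fact.out (p := p.Prime)).ne_zero)
  refine ⟨?_, hcard⟩
  rcases Nat.eq_zero_or_pos n with hn | hn
  · subst hn
    exact isCyclic_of_orderOf_eq_card 1 (by rw [hcard, orderOf_one, pow_zero])
  · have hpnorm : ‖(p : PadicInt p)‖ < 1 := by
      rw [PadicInt.norm_p]
      rw [inv_lt_one_iff₀]
      right
      exact_mod_cast (Fact.out (p := p.Prime)).one_lt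
    have hunit : IsUnit ((1 : PadicInt p) + p) := by
      rw [PadicInt.isUnit_iff]
      have := norm_one_add_mul (p := p) (s := 1) hpnorm
      rwa [mul_one] at this
    set u₀ : G := hunit.unit with hu₀
    set q₀ : G ⧸ N := QuotientGroup.mk u₀ with hq₀
    have hq : q₀ ^ p ^ (n - 1) ≠ 1 := by
      intro h
      have hmem : u₀ ^ p ^ (n - 1) ∈ N := by
        rw [← QuotientGroup.eq_one_iff]
        rw [hq₀] at h
        rw [← h]
        rfl
      obtain ⟨v, hv⟩ := hmem
      rw [powMonoidHom_apply] at hv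
      have h1 : (v ^ p * u₀⁻¹) ^ p ^ (n - 1) = 1 := by
        rw [mul_pow, ← pow_mul, inv_pow, show p * p ^ (n - 1) = p ^ n by
          rw [← pow_succ']; congr 1; omega, hv, mul_inv_cancel]
      have h2 : ((v ^ p * u₀⁻¹ : G) : PadicInt p) ^ p ^ (n - 1) = 1 := by
        rw [← Units.val_pow_eq_pow_val, h1, Units.val_one]
      have h3 : ((v ^ p * u₀⁻¹ : G) : PadicInt p) = 1 := ppow_root_unity hp h2
      have h4 : v ^ p * u₀⁻¹ = 1 := Units.ext (by simpa using h3)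
      have h5 : v ^ p = u₀ := by
        rwa [mul_inv_eq_one] at h4
      apply not_pth_power_one_add_p hp ((v : PadicInt p))
      rw [← Units.val_pow_eq_pow_val, h5, hu₀, IsUnit.unit_spec]
    have hdvd : orderOf q₀ ∣ p ^ n := hcard ▸ orderOf_dvd_natCard q₀
    obtain ⟨j, hjn, hj⟩ := (Nat.dvd_prime_pow (Fact.out (p := p.Prime))).mp hdvd
    have horder : orderOf q₀ = p ^ n := by
      rcases eq_or_lt_of_le hjn with hh | hh
      · rw [hj, hh]
      · exfalso
        apply hq
        apply orderOf_dvd_iff_pow_eq_one.mp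
        rw [hj]
        exact pow_dvd_pow p (by omega)
    exact isCyclic_of_orderOf_eq_card q₀ (horder.trans hcard.symm)
end

section
/- Let p be an odd prime and let H be the subgroup of ℚ_pˣ generated by −1 and p. Then: (a) H equals the image of the unit group of ℤ[1/p] under the group homomorphism on units induced by the canonical ring homomorphism ℤ[1/p] → ℚ_p; and (b) the composite of the inclusion ℤ_pˣ → ℚ_pˣ with the quotient map ℚ_pˣ → ℚ_pˣ/H is surjective, with kernel equal to {1, −1}. In particular it induces an isomorphism ℤ_pˣ/{±1} ≅ ℚ_pˣ/H. -/
/-- `p` viewed as a unit of `ℚ_p`. -/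
noncomputable def pUnitQp (p : ℕ) [Fact p.Prime] : (ℚ_[p])ˣ :=
  Units.mk0 (p : ℚ_[p])
    (Nat.cast_ne_zero.mpr (Fact.out : p.Prime).ne_zero)

/-- The canonical ring homomorphism `ℤ[1/p] → ℚ_p` from the localization of `ℤ` away
from `p`. -/
noncomputable def zInvPToQp (p : ℕ) [Fact p.Prime] :
    Localization.Away (p : ℤ) →+* ℚ_[p] :=
  Localization.awayLift (Int.castRingHom ℚ_[p]) (p : ℤ)
    (by
      have h : ((p : ℤ) : ℚ_[p]) ≠ 0 :=
        Int.cast_ne_zero.mpr (Int.natCast_ne_zero.mpr (Fact.out : p.Prime).ne_zero)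
      exact isUnit_iff_ne_zero.mpr (by simpa using h))

lemma zInvPToQp_algebraMap (p : ℕ) [Fact p.Prime] (a : ℤ) :
    zInvPToQp p (algebraMap ℤ (Localization.Away (p : ℤ)) a) = (a : ℚ_[p]) := by
  simp [zInvPToQp]


/-- Let `p` be an odd prime and `H ≤ ℚ_pˣ` the subgroup generated by `-1` and `p`.  Then
(a) `H` is the image of the unit group of `ℤ[1/p]` under the map on units induced by the
canonical ring homomorphism `ℤ[1/p] → ℚ_p`, and (b) the composite
`ℤ_pˣ → ℚ_pˣ → ℚ_pˣ/H` is surjective with kernel `{1, -1}`. -/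
theorem units_zInvP_image_and_padicUnits_quotient (p : ℕ) [Fact p.Prime] (hp : Odd p) :
    Subgroup.closure {(-1 : (ℚ_[p])ˣ), pUnitQp p} =
      (Units.map (zInvPToQp p).toMonoidHom).range ∧
    Function.Surjective
      ((QuotientGroup.mk' (Subgroup.closure {(-1 : (ℚ_[p])ˣ), pUnitQp p})).comp
        (Units.map (PadicInt.Coe.ringHom (p := p)).toMonoidHom)) ∧
    ∀ x : (PadicInt p)ˣ,
      ((QuotientGroup.mk' (Subgroup.closure {(-1 : (ℚ_[p])ˣ), pUnitQp p})).comp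
        (Units.map (PadicInt.Coe.ringHom (p := p)).toMonoidHom)) x = 1 ↔
      x = 1 ∨ x = -1 := by
  have hpQ : ((p : ℚ_[p])) ≠ 0 := Nat.cast_ne_zero.mpr (Fact.out : p.Prime).ne_zero
  set H := Subgroup.closure {(-1 : (ℚ_[p])ˣ), pUnitQp p} with hH
  have hm1 : (-1 : (ℚ_[p])ˣ) ∈ H := Subgroup.subset_closure (by simp)
  have hpU : pUnitQp p ∈ H := Subgroup.subset_closure (by simp)
  have hinj : Function.Injective (PadicInt.Coe.ringHom (p := p)) := Subtype.coe_injective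
  have hmapneg : Units.map (PadicInt.Coe.ringHom (p := p)).toMonoidHom (-1) = -1 := by
    ext; simp
  refine ⟨?_, ?_, ?_⟩
  · apply le_antisymm
    · rw [Subgroup.closure_le]
      rintro x hx
      rcases hx with rfl | rfl
      · refine ⟨-1, ?_⟩
        ext
        simp
      · refine ⟨(IsLocalization.Away.algebraMap_isUnit (S := Localization.Away (p : ℤ))
          (p : ℤ)).unit, ?_⟩
        ext
        have : ((Units.map (zInvPToQp p).toMonoidHom
            (IsLocalization.Away.algebraMap_isUnit (S := Localization.Away (p : ℤ))
              (p : ℤ)).unit : (ℚ_[p])ˣ) : ℚ_[p]) =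
            zInvPToQp p (algebraMap ℤ (Localization.Away (p : ℤ)) (p : ℤ)) := rfl
        rw [this, zInvPToQp_algebraMap]
        simp [pUnitQp]
    · rintro _ ⟨u, rfl⟩
      obtain ⟨⟨a, s⟩, hs⟩ := IsLocalization.surj (Submonoid.powers (p : ℤ))
        ((u : (Localization.Away (p : ℤ))ˣ) : Localization.Away (p : ℤ))
      obtain ⟨n, hn⟩ := s.2
      obtain ⟨⟨b, t⟩, ht⟩ := IsLocalization.surj (Submonoid.powers (p : ℤ))
        ((u⁻¹ : (Localization.Away (p : ℤ))ˣ) : Localization.Away (p : ℤ))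
      obtain ⟨m, hm⟩ := t.2
      set F := zInvPToQp p with hF
      have hU : F u * (p : ℚ_[p]) ^ n = (a : ℚ_[p]) := by
        have := congrArg F hs
        simpa [zInvPToQp_algebraMap, ← hn, map_mul, ← hF] using this
      have hV : F (↑u⁻¹) * (p : ℚ_[p]) ^ m = (b : ℚ_[p]) := by
        have := congrArg F ht
        simpa [zInvPToQp_algebraMap, ← hm, map_mul, ← hF] using this
      have hUV : F u * F (↑u⁻¹) = 1 := by
        rw [← map_mul]
        simp
      have hab : (a : ℚ_[p]) * b = (p : ℚ_[p]) ^ (n + m) :=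
        calc (a : ℚ_[p]) * b = (F u * F (↑u⁻¹)) * ((p : ℚ_[p]) ^ n * (p : ℚ_[p]) ^ m) := by
              rw [← hU, ← hV]; ring
          _ = (p : ℚ_[p]) ^ (n + m) := by rw [hUV, one_mul, pow_add]
      have habZ : a * b = (p : ℤ) ^ (n + m) := by
        have : ((a * b : ℤ) : ℚ_[p]) = (((p : ℤ) ^ (n + m) : ℤ) : ℚ_[p]) := by push_cast; exact hab
        exact_mod_cast this
      have hdvd : a.natAbs ∣ p ^ (n + m) := by
        have h1 : a ∣ (p : ℤ) ^ (n + m) := ⟨b, habZ.symm⟩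
        have h2 : a.natAbs ∣ ((p : ℤ) ^ (n + m)).natAbs := Int.natAbs_dvd_natAbs.mpr h1
        rwa [Int.natAbs_pow, Int.natAbs_natCast] at h2
      obtain ⟨k, -, hk⟩ := (Nat.dvd_prime_pow Fact.out).mp hdvd
      have key : ∀ (e : ℤ) (ε : ℚ_[p]), ((-1 : ℚ_[p])) ^ e = ε →
          (a : ℚ_[p]) = ε * (p : ℚ_[p]) ^ k →
          Units.map F.toMonoidHom u ∈ H := by
        intro e ε hε he
        rw [hH, Subgroup.mem_closure_pair]
        refine ⟨e, (k : ℤ) - n, ?_⟩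
        ext
        rw [Units.val_mul, Units.val_zpow_eq_zpow_val, Units.val_zpow_eq_zpow_val]
        show (((-1 : (ℚ_[p])ˣ) : ℚ_[p])) ^ e * ((pUnitQp p : ℚ_[p])) ^ ((k : ℤ) - n) = F u
        rw [show ((-1 : (ℚ_[p])ˣ) : ℚ_[p]) = -1 from rfl, hε,
          show ((pUnitQp p : ℚ_[p])) = (p : ℚ_[p]) from rfl]
        have hFu : F u = (a : ℚ_[p]) / (p : ℚ_[p]) ^ n := by
          rw [eq_div_iff (pow_ne_zero _ hpQ)]; exact hU
        rw [hFu, he, zpow_sub₀ hpQ, zpow_natCast, zpow_natCast]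
        ring
      have hcase : (a : ℚ_[p]) = (p : ℚ_[p]) ^ k ∨ (a : ℚ_[p]) = -(p : ℚ_[p]) ^ k := by
        rcases Int.natAbs_eq a with h | h
        · left; rw [h, hk]; push_cast; ring
        · right; rw [h, hk]; push_cast; ring
      rcases hcase with h | h
      · exact key 0 1 (zpow_zero _) (by simpa using h)
      · exact key 1 (-1) (zpow_one _) (by simpa using h)
  · intro q
    obtain ⟨y, rfl⟩ := QuotientGroup.mk'_surjective H q
    have hy : ((y : ℚ_[p]) ≠ 0) := y.ne_zero
    set v := (y : ℚ_[p]).valuation with hv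
    have hnorm : ‖(y : ℚ_[p]) * (p : ℚ_[p]) ^ (-v)‖ = 1 := by
      rw [norm_mul, Padic.norm_eq_zpow_neg_valuation hy, Padic.norm_p_zpow, ← zpow_add₀
        (show (p : ℝ) ≠ 0 by exact_mod_cast (Fact.out : p.Prime).pos.ne')]
      simp [← hv]
    refine ⟨PadicInt.mkUnits hnorm, ?_⟩
    simp only [MonoidHom.comp_apply, QuotientGroup.mk'_apply]
    rw [QuotientGroup.eq]
    have hmem : (Units.map (PadicInt.Coe.ringHom (p := p)).toMonoidHom
        (PadicInt.mkUnits hnorm))⁻¹ * y = pUnitQp p ^ v := by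
      ext
      rw [Units.val_mul, Units.val_zpow_eq_zpow_val, Units.val_inv_eq_inv_val]
      have h1 : ((Units.map (PadicInt.Coe.ringHom (p := p)).toMonoidHom
          (PadicInt.mkUnits hnorm) : (ℚ_[p])ˣ) : ℚ_[p]) = (y : ℚ_[p]) * (p : ℚ_[p]) ^ (-v) :=
        PadicInt.mkUnits_eq hnorm
      rw [h1, show ((pUnitQp p : ℚ_[p])) = (p : ℚ_[p]) from rfl, zpow_neg, mul_inv, inv_inv]
      field_simp
    rw [hmem]
    exact Subgroup.zpow_mem H hpU v
  · intro x
    simp only [MonoidHom.comp_apply, QuotientGroup.mk'_apply, QuotientGroup.eq_one_iff]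
    constructor
    · intro hx
      rw [hH, Subgroup.mem_closure_pair] at hx
      obtain ⟨m, n, hmn⟩ := hx
      have hnormx : ‖((Units.map (PadicInt.Coe.ringHom (p := p)).toMonoidHom x
          : (ℚ_[p])ˣ) : ℚ_[p])‖ = 1 := PadicInt.norm_units x
      have hval := congrArg (fun u : (ℚ_[p])ˣ => ‖(u : ℚ_[p])‖) hmn
      simp only [Units.val_mul, Units.val_zpow_eq_zpow_val, norm_mul, norm_zpow,
        Units.val_neg, Units.val_one, norm_neg, norm_one, one_zpow, one_mul,
        show ((pUnitQp p : ℚ_[p])) = (p : ℚ_[p]) from rfl, Padic.norm_p_zpow, hnormx] at hval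
      have hp1 : (1 : ℝ) < (p : ℝ) := by exact_mod_cast (Fact.out : p.Prime).one_lt
      rw [Padic.norm_p] at hval
      have hn0 : n = 0 := by
        have hne : ((p : ℝ))⁻¹ ≠ 1 := by
          intro h
          rw [inv_eq_one] at h
          linarith
        exact (zpow_eq_one_iff_right₀ (by positivity) hne).mp hval
      rw [hn0, zpow_zero, mul_one] at hmn
      have hx1 : Units.map (PadicInt.Coe.ringHom (p := p)).toMonoidHom x = 1 ∨
          Units.map (PadicInt.Coe.ringHom (p := p)).toMonoidHom x = -1 := by
        rcases Int.even_or_odd m with he | ho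
        · left; rw [← hmn]; ext; simp [Units.val_zpow_eq_zpow_val, he.neg_one_zpow]
        · right; rw [← hmn]; ext; simp [Units.val_zpow_eq_zpow_val, ho.neg_one_zpow]
      rcases hx1 with h | h
      · left
        exact Units.map_injective hinj (by rw [h, map_one])
      · right
        exact Units.map_injective hinj (by rw [h, hmapneg])
    · rintro (rfl | rfl)
      · rw [map_one]; exact one_mem H
      · rw [hmapneg]; exact hm1
end
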